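/- arXiv:2406.10122 — 7 statements merged into one kernel-verified Lean document; each statement's English description precedes it below -/
import Mathlib

section
/- Let n ≥ 2. An invertible upper triangular n×n complex matrix g stabilizes the flag E* = (e_n ⊂ e_1 ⊂ e_2 ⊂ ⋯ ⊂ e_{n-1}) (i.e., maps each of its subspaces to itself) if and only if g = z·b for some nonzero scalar z ∈ ℂ* and some b ∈ B_{n-1}. Equivalently, B ∩ B* = Z·B_{n-1}, where Z is the centre of GL(n,ℂ). -/
/-
Common setup.  The ambient space is `ℂ^(n+1)` (so the paper's `n` is our `n + 1`,
and the paper's hypothesis `n ≥ 2` becomes `1 ≤ n`).  Coordinates are indexed by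
`Fin (n+1)`, zero-indexed, so the paper's index `i ∈ {1, …, n}` is our `i - 1`,
and the paper's `e_n` is `e (Fin.last n)`.
-/

noncomputable section

namespace ShareshianPairs

/-- The standard basis vector `e i` of `ℂ^(n+1)`. -/
def e (n : ℕ) (i : Fin (n + 1)) : Fin (n + 1) → ℂ := Pi.single i 1

/-- The hat vector `ê j = e j + e n`. -/
def hatE (n : ℕ) (j : Fin (n + 1)) : Fin (n + 1) → ℂ := e n j + e n (Fin.last n)

/-- The flag `(v 0 ⊂ v 1 ⊂ ⋯)` spanned by a sequence of vectors. -/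
def flagOf (n : ℕ) (v : Fin (n + 1) → Fin (n + 1) → ℂ) :
    Fin (n + 1) → Submodule ℂ (Fin (n + 1) → ℂ) :=
  fun i => Submodule.span ℂ (v '' {j | j ≤ i})

/-- A full flag in `ℂ^(n+1)`. -/
def IsFlag (n : ℕ) (V : Fin (n + 1) → Submodule ℂ (Fin (n + 1) → ℂ)) : Prop :=
  Monotone V ∧ ∀ i : Fin (n + 1), Module.finrank ℂ (V i) = (i : ℕ) + 1

/-- The action of `GL(n+1, ℂ)` on flags. -/
def actFlag (n : ℕ) (g : Matrix.GeneralLinearGroup (Fin (n + 1)) ℂ)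
    (V : Fin (n + 1) → Submodule ℂ (Fin (n + 1) → ℂ)) :
    Fin (n + 1) → Submodule ℂ (Fin (n + 1) → ℂ) :=
  fun i => (V i).map (Matrix.mulVecLin (g : Matrix (Fin (n + 1)) (Fin (n + 1)) ℂ))

/-- Membership in the Borel subgroup `B` of invertible upper triangular matrices. -/
def InB (n : ℕ) (g : Matrix.GeneralLinearGroup (Fin (n + 1)) ℂ) : Prop :=
  ∀ i j : Fin (n + 1), j < i → (g : Matrix (Fin (n + 1)) (Fin (n + 1)) ℂ) i j = 0

/-- Membership in `B_{n-1} ⊂ B` : upper triangular, last diagonal entry `1`,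
remaining last-column entries `0`. -/
def InBsmall (n : ℕ) (g : Matrix.GeneralLinearGroup (Fin (n + 1)) ℂ) : Prop :=
  InB n g ∧
    (g : Matrix (Fin (n + 1)) (Fin (n + 1)) ℂ) (Fin.last n) (Fin.last n) = 1 ∧
    ∀ i : Fin (n + 1), i ≠ Fin.last n →
      (g : Matrix (Fin (n + 1)) (Fin (n + 1)) ℂ) i (Fin.last n) = 0

/-- The spanning vectors of the flag `E* = (e_n ⊂ e_1 ⊂ ⋯ ⊂ e_{n-1})`. -/
def eStarVec (n : ℕ) : Fin (n + 1) → Fin (n + 1) → ℂ :=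
  fun i => Fin.cases (e n (Fin.last n)) (fun j => e n j.castSucc) i

/-- Membership in `B*`, the stabilizer of the flag `E*`. -/
def InBstar (n : ℕ) (g : Matrix.GeneralLinearGroup (Fin (n + 1)) ℂ) : Prop :=
  actFlag n g (flagOf n (eStarVec n)) = flagOf n (eStarVec n)

/-- Membership in `H`, the invertible diagonal matrices. -/
def InH (n : ℕ) (g : Matrix.GeneralLinearGroup (Fin (n + 1)) ℂ) : Prop :=
  ∀ i j : Fin (n + 1), i ≠ j → (g : Matrix (Fin (n + 1)) (Fin (n + 1)) ℂ) i j = 0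

/-- The orbit of a flag under the subgroup `{g | P g}`. -/
def orbit (n : ℕ) (P : Matrix.GeneralLinearGroup (Fin (n + 1)) ℂ → Prop)
    (V : Fin (n + 1) → Submodule ℂ (Fin (n + 1) → ℂ)) :
    Set (Fin (n + 1) → Submodule ℂ (Fin (n + 1) → ℂ)) :=
  {W | ∃ g : Matrix.GeneralLinearGroup (Fin (n + 1)) ℂ, P g ∧ W = actFlag n g V}

/-- A sequence of spanning vectors is in standard form. -/
def IsStdForm (n : ℕ) (v : Fin (n + 1) → Fin (n + 1) → ℂ) : Prop :=
  LinearIndependent ℂ v ∧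
  (∀ i, (∃ j, v i = e n j) ∨ (∃ j, j ≠ Fin.last n ∧ v i = hatE n j)) ∧
  (∃ i, v i = e n (Fin.last n)) ∧
  (∀ i k : Fin (n + 1), v i = e n (Fin.last n) → i < k → ∃ j, v k = e n j) ∧
  (∀ i k ji jk : Fin (n + 1), i < k → ji ≠ Fin.last n → jk ≠ Fin.last n →
    v i = hatE n ji → v k = hatE n jk → jk < ji)

/-- `vs` spans the flag `F*` : each hat vector `ê j` of `v` is replaced by `e j`,
all other entries are unchanged. -/
def StarPair (n : ℕ) (v vs : Fin (n + 1) → Fin (n + 1) → ℂ) : Prop :=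
  ∀ q : Fin (n + 1),
    ((∃ t, v q = e n t) → vs q = v q) ∧
    (∀ j : Fin (n + 1), j ≠ Fin.last n → v q = hatE n j → vs q = e n j)

/-- `vt` spans the flag `F̃` attached to the standard-form flag spanned by `v`. -/
def TildePair (n : ℕ) (v vt : Fin (n + 1) → Fin (n + 1) → ℂ) : Prop :=
  ((∀ q, ∃ t, v q = e n t) ∧ vt = v) ∨
  (∃ (k : ℕ) (hk : 0 < k) (i j : Fin k → Fin (n + 1)) (p : Fin (n + 1)),
    StrictAnti i ∧ StrictMono j ∧
    (∀ m : Fin k, j m ≠ Fin.last n ∧ v (i m) = hatE n (j m)) ∧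
    v p = e n (Fin.last n) ∧
    (∀ q : Fin (n + 1), (∀ m : Fin k, q ≠ i m) → ∃ t, v q = e n t) ∧
    vt (i ⟨k - 1, Nat.sub_lt hk Nat.one_pos⟩) = e n (Fin.last n) ∧
    (∀ (m : Fin k) (h : (m : ℕ) + 1 < k), vt (i m) = e n (j ⟨(m : ℕ) + 1, h⟩)) ∧
    vt p = e n (j ⟨0, hk⟩) ∧
    (∀ q : Fin (n + 1), (∀ m : Fin k, q ≠ i m) → q ≠ p → vt q = v q))

/-- The `(n+1)`-cycle `σ`, zero-indexed version of the paper's `σ = (n, n-1, …, 1)`: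
`σ 0 = n` and `σ k = k - 1` for `k ≥ 1`. -/
def sigma (n : ℕ) : Equiv.Perm (Fin (n + 1)) := (finRotate (n + 1))⁻¹

/-- The cycle `τ_Δ = (n, j_k, …, j_2, j_1)` attached to a subset
`Δ = {j_1 < ⋯ < j_k < n} ∪ {n}`:  it sends each element of `Δ` to the next
smaller element (the smallest going back to the largest) and fixes everything else. -/
def tauDelta (n : ℕ) (Δ : Finset (Fin (n + 1))) : Equiv.Perm (Fin (n + 1)) :=
  ((Δ.sort (· ≤ ·)).formPerm)⁻¹

/-- `Δ` is a decreasing sequence for `w⁻¹`. -/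
def IsDecreasingFor (n : ℕ) (Δ : Finset (Fin (n + 1)))
    (w : Equiv.Perm (Fin (n + 1))) : Prop :=
  ∀ x ∈ Δ, ∀ y ∈ Δ, x < y → w⁻¹ y < w⁻¹ x

/-- The spanning vectors of the flag `y(E*)`. -/
def eStarPermVec (n : ℕ) (y : Equiv.Perm (Fin (n + 1))) :
    Fin (n + 1) → Fin (n + 1) → ℂ :=
  fun i => Fin.cases (e n (y (Fin.last n))) (fun t => e n (y t.castSucc)) i

/-- Coxeter length = number of inversions. -/
def len (n : ℕ) (w : Equiv.Perm (Fin (n + 1))) : ℕ :=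
  (Finset.univ.filter
    (fun p : Fin (n + 1) × Fin (n + 1) => p.1 < p.2 ∧ w p.2 < w p.1)).card

/-- Length with respect to the set of simple reflections `S*`. -/
def lenStar (n : ℕ) (x : Equiv.Perm (Fin (n + 1))) : ℕ :=
  len n ((sigma n)⁻¹ * x * sigma n)

/-- Bruhat order on the symmetric group (tableau criterion):
`y ≤ w` iff `#{i ≤ p : y i ≤ q} ≥ #{i ≤ p : w i ≤ q}` for all `p, q`. -/
def bruhatLE (n : ℕ) (y w : Equiv.Perm (Fin (n + 1))) : Prop :=
  ∀ p q : Fin (n + 1),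
    (Finset.univ.filter (fun i => i ≤ p ∧ w i ≤ q)).card ≤
      (Finset.univ.filter (fun i => i ≤ p ∧ y i ≤ q)).card

/-- The total order `n ≺ 1 ≺ 2 ≺ ⋯ ≺ n - 1` (zero-indexed). -/
def precOrd (n : ℕ) (a b : Fin (n + 1)) : Prop :=
  finRotate (n + 1) a < finRotate (n + 1) b

/-- `(w, u*)` is a Shareshian pair. -/
def IsShPair (n : ℕ) (w u : Equiv.Perm (Fin (n + 1))) : Prop :=
  ∃ Δ : Finset (Fin (n + 1)), Fin.last n ∈ Δ ∧ IsDecreasingFor n Δ w ∧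
    u = tauDelta n Δ * w * (sigma n)⁻¹

/-- The matrix whose `i`-th column is `v i`. -/
def colMat (n : ℕ) (v : Fin (n + 1) → Fin (n + 1) → ℂ) :
    Matrix (Fin (n + 1)) (Fin (n + 1)) ℂ :=
  Matrix.of fun r c => v c r

/-- The double coset `{b₁ * g * b₂ | P b₁, Q b₂}` as a set of matrices. -/
def dblCoset (n : ℕ) (P Q : Matrix.GeneralLinearGroup (Fin (n + 1)) ℂ → Prop)
    (g : Matrix (Fin (n + 1)) (Fin (n + 1)) ℂ) :
    Set (Matrix (Fin (n + 1)) (Fin (n + 1)) ℂ) :=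
  {x | ∃ b₁ b₂ : Matrix.GeneralLinearGroup (Fin (n + 1)) ℂ, P b₁ ∧ Q b₂ ∧
    x = (b₁ : Matrix (Fin (n + 1)) (Fin (n + 1)) ℂ) * g *
      (b₂ : Matrix (Fin (n + 1)) (Fin (n + 1)) ℂ)}

/-- The coordinate subspace `E_q = span {e_1, …, e_q}`. -/
def Esub (n : ℕ) (q : ℕ) : Submodule ℂ (Fin (n + 1) → ℂ) :=
  Submodule.span ℂ (e n '' {t : Fin (n + 1) | (t : ℕ) < q})

/-- The line `L = ℂ e_n`. -/
def Lline (n : ℕ) : Submodule ℂ (Fin (n + 1) → ℂ) :=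
  Submodule.span ℂ {e n (Fin.last n)}

/-! An upper triangular matrix preserves each coordinate subspace `span {e_1, …, e_q}`, and every
member of `E*` is such a subspace plus the line `ℂ e_n`. Hence `g ∈ B` stabilizes `E*` exactly when
`g e_n ∈ ℂ e_n`, i.e. when the last column of `g` vanishes off the diagonal; dividing `g` by its
last diagonal entry, which is nonzero since `det g` is the product of the diagonal, then gives an
element of `B_{n-1}`. -/

theorem _root_.Submodule.map_eq_of_map_le_of_injective {K V : Type*} [DivisionRing K]
    [AddCommGroup V] [Module K V] {f : V →ₗ[K] V} (hf : Function.Injective f)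
    {W : Submodule K V} [FiniteDimensional K W] (h : W.map f ≤ W) : W.map f = W :=
  Submodule.eq_of_le_of_finrank_le h (W.equivMapOfInjective f hf).finrank_eq.le

theorem mem_span_e_image_iff {n : ℕ} {S : Set (Fin (n + 1))} {x : Fin (n + 1) → ℂ} :
    x ∈ Submodule.span ℂ (e n '' S) ↔ ∀ t ∉ S, x t = 0 := by
  have hb : ⇑(Pi.basisFun ℂ (Fin (n + 1))) = e n := by
    funext i; simp [e]
  rw [← hb, Module.Basis.mem_span_image]
  simp only [Set.subset_def, Finset.mem_coe, Finsupp.mem_support_iff, Pi.basisFun_repr]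
  exact forall_congr' fun t => not_imp_comm

theorem mulVecLin_e {n : ℕ} (M : Matrix (Fin (n + 1)) (Fin (n + 1)) ℂ) (s t : Fin (n + 1)) :
    M.mulVecLin (e n s) t = M t s := by
  simp [e]

theorem eStarVec_image_Iic (n : ℕ) (i : Fin (n + 1)) :
    eStarVec n '' Set.Iic i = e n '' ({t | (t : ℕ) < i} ∪ {Fin.last n}) := by
  ext x
  constructor
  · rintro ⟨j, hj, rfl⟩
    induction j using Fin.cases with
    | zero => exact ⟨Fin.last n, Or.inr rfl, rfl⟩
    | succ t =>
      refine ⟨t.castSucc, Or.inl ?_, rfl⟩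
      rw [Set.mem_Iic, Fin.le_def, Fin.val_succ] at hj
      show (t.castSucc : ℕ) < i
      rw [Fin.val_castSucc]
      omega
  · rintro ⟨s, hs | rfl, rfl⟩
    · have hsi : (s : ℕ) < i := hs
      have hin := i.isLt
      exact ⟨Fin.succ ⟨s, by omega⟩, Fin.le_def.mpr (by simpa using hsi), rfl⟩
    · exact ⟨0, Fin.zero_le i, rfl⟩

theorem flagOf_eStarVec (n : ℕ) (i : Fin (n + 1)) :
    flagOf n (eStarVec n) i = Submodule.span ℂ (e n '' ({t | (t : ℕ) < i} ∪ {Fin.last n})) :=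
  congrArg (Submodule.span ℂ) (eStarVec_image_Iic n i)

theorem mem_flagOf_eStarVec_iff {n : ℕ} {i : Fin (n + 1)} {x : Fin (n + 1) → ℂ} :
    x ∈ flagOf n (eStarVec n) i ↔ ∀ t ≠ Fin.last n, (i : ℕ) ≤ t → x t = 0 := by
  rw [flagOf_eStarVec, mem_span_e_image_iff]
  simp

theorem inBstar_iff_forall_map_le {n : ℕ} (g : Matrix.GeneralLinearGroup (Fin (n + 1)) ℂ) :
    InBstar n g ↔ ∀ i, (flagOf n (eStarVec n) i).map
      (g : Matrix (Fin (n + 1)) (Fin (n + 1)) ℂ).mulVecLin ≤ flagOf n (eStarVec n) i := by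
  rw [InBstar, funext_iff]
  exact forall_congr' fun i => ⟨le_of_eq, Submodule.map_eq_of_map_le_of_injective
    (Matrix.mulVec_injective_iff_isUnit.mpr g.isUnit)⟩

theorem inBstar_iff_of_inB {n : ℕ} {g : Matrix.GeneralLinearGroup (Fin (n + 1)) ℂ}
    (hg : InB n g) :
    InBstar n g ↔
      ∀ t ≠ Fin.last n, (g : Matrix (Fin (n + 1)) (Fin (n + 1)) ℂ) t (Fin.last n) = 0 := by
  rw [inBstar_iff_forall_map_le]
  constructor
  · intro h t ht
    have he : e n (Fin.last n) ∈ flagOf n (eStarVec n) 0 :=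
      mem_flagOf_eStarVec_iff.mpr fun s hs _ => Pi.single_eq_of_ne hs 1
    have hge := mem_flagOf_eStarVec_iff.mp (h 0 (Submodule.mem_map_of_mem he)) t ht (Nat.zero_le _)
    rwa [mulVecLin_e] at hge
  · intro hc i
    rw [flagOf_eStarVec, Submodule.map_span_le]
    rintro _ ⟨s, hs, rfl⟩
    rw [← flagOf_eStarVec, mem_flagOf_eStarVec_iff]
    intro t ht hit
    rw [mulVecLin_e]
    rcases hs with hs | rfl
    · exact hg t s (Fin.lt_def.mpr (lt_of_lt_of_le hs hit))
    · exact hc t ht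

theorem InB.diag_ne_zero {n : ℕ} {g : Matrix.GeneralLinearGroup (Fin (n + 1)) ℂ}
    (hg : InB n g) (i : Fin (n + 1)) : (g : Matrix (Fin (n + 1)) (Fin (n + 1)) ℂ) i i ≠ 0 := by
  have hdet := ((Matrix.isUnit_iff_isUnit_det _).mp g.isUnit).ne_zero
  rw [Matrix.det_of_isUpperTriangular fun i j h => hg i j h] at hdet
  exact Finset.prod_ne_zero_iff.mp hdet i (Finset.mem_univ i)

theorem exists_smul_inBsmall_iff {n : ℕ} {g : Matrix.GeneralLinearGroup (Fin (n + 1)) ℂ}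
    (hg : InB n g) :
    (∃ (z : ℂ) (b : Matrix.GeneralLinearGroup (Fin (n + 1)) ℂ),
        z ≠ 0 ∧ InBsmall n b ∧
        (g : Matrix (Fin (n + 1)) (Fin (n + 1)) ℂ) =
          z • (b : Matrix (Fin (n + 1)) (Fin (n + 1)) ℂ)) ↔
      ∀ t ≠ Fin.last n, (g : Matrix (Fin (n + 1)) (Fin (n + 1)) ℂ) t (Fin.last n) = 0 := by
  constructor
  · rintro ⟨z, b, -, ⟨-, -, hb⟩, hgb⟩ t ht
    rw [hgb, Matrix.smul_apply, hb t ht, smul_zero]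
  · intro hc
    have hz := hg.diag_ne_zero (Fin.last n)
    refine ⟨_, (Units.mk0 _ hz)⁻¹ • g, hz, ⟨fun i j hij => ?_, ?_, fun i hi => ?_⟩, ?_⟩
    · simp [hg i j hij]
    · simp [Units.smul_def, hz]
    · simp [hc i hi]
    · simp [Units.smul_def, hz]

theorem statement0_general (n : ℕ)
    (g : Matrix.GeneralLinearGroup (Fin (n + 1)) ℂ) (hg : InB n g) :
    InBstar n g ↔
      ∃ (z : ℂ) (b : Matrix.GeneralLinearGroup (Fin (n + 1)) ℂ),
        z ≠ 0 ∧ InBsmall n b ∧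
        (g : Matrix (Fin (n + 1)) (Fin (n + 1)) ℂ) =
          z • (b : Matrix (Fin (n + 1)) (Fin (n + 1)) ℂ) :=
  (inBstar_iff_of_inB hg).trans (exists_smul_inBsmall_iff hg).symm

/-- an invertible upper triangular matrix stabilizes the flag `E*`
iff it is a nonzero scalar multiple of an element of `B_{n-1}`;
equivalently `B ∩ B* = Z · B_{n-1}`. -/
theorem statement0 (n : ℕ) (hn : 1 ≤ n)
    (g : Matrix.GeneralLinearGroup (Fin (n + 1)) ℂ) (hg : InB n g) :
    InBstar n g ↔
      ∃ (z : ℂ) (b : Matrix.GeneralLinearGroup (Fin (n + 1)) ℂ),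
        z ≠ 0 ∧ InBsmall n b ∧
        (g : Matrix (Fin (n + 1)) (Fin (n + 1)) ℂ) =
          z • (b : Matrix (Fin (n + 1)) (Fin (n + 1)) ℂ) :=
  statement0_general n g hg

end ShareshianPairs
end
end

section
/- Let F be a flag in standard form in ℂ^n containing no hat vectors (i.e., every v_i is a standard basis vector). Then h·F = F for every invertible diagonal matrix h ∈ H, and F is the unique flag fixed by all of H lying in the orbit B·F, and also the unique flag fixed by all of H lying in the orbit B*·F. -/
/-
A subspace fixed by every invertible diagonal matrix is a coordinate subspace: applying
`diag(1, …, 2, …, 1)` with the `2` in place `a` and subtracting isolates the `a`-th coordinate.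
Both `B` and `B*` stabilize a full coordinate flag `E_p = span {e_a : f a ≤ p}` (`f` the
identity, resp. `finRotate`, which puts `e_n` first). If such a `g` maps the coordinate subspace
on `T` onto the coordinate subspace on `S`, then, being injective and preserving each `E_p`, it
maps the intersection with `E_p` onto the intersection with `E_p`, so
`#{a ∈ S | f a ≤ p} = #{a ∈ T | f a ≤ p}` for every `p`, which forces `S = T`. A flag spanned
by standard basis vectors consists of coordinate subspaces, hence is the only `H`-fixed flag in
its `B`- and `B*`-orbit.
-/

/-
Common setup.  The ambient space is `ℂ^(n+1)` (so the paper's `n` is our `n + 1`,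
and the paper's hypothesis `n ≥ 2` becomes `1 ≤ n`).  Coordinates are indexed by
`Fin (n+1)`, zero-indexed, so the paper's index `i ∈ {1, …, n}` is our `i - 1`,
and the paper's `e_n` is `e (Fin.last n)`.
-/

noncomputable section

namespace Finset

theorem eq_of_forall_card_filter_le_eq {ι β : Type*} [DecidableEq ι] [LinearOrder β]
    {f : ι → β} (hf : Function.Injective f) {S T : Finset ι}
    (h : ∀ p, #(S.filter (f · ≤ p)) = #(T.filter (f · ≤ p))) : S = T := by
  by_contra hne
  obtain ⟨x, hx, hmin⟩ := (symmDiff S T).exists_min_image f (symmDiff_nonempty.2 hne)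
  have hbelow : S.filter (f · < f x) = T.filter (f · < f x) := by
    ext y
    simp only [mem_filter, and_congr_left_iff]
    intro hy
    by_contra hST
    exact (hmin y (mem_symmDiff.2 (by tauto))).not_gt hy
  have hsplit (U : Finset ι) :
      #(U.filter (f · ≤ f x)) = #(U.filter (f · < f x)) + #(U.filter (· = x)) := by
    rw [← card_union_of_disjoint, ← filter_or]
    · congr 1; ext y; simp [le_iff_lt_or_eq, hf.eq_iff]
    · exact disjoint_filter.2 fun y _ hy hyx => hy.ne (congrArg f hyx)
  have := h (f x)
  rw [hsplit, hsplit, hbelow, filter_eq', filter_eq'] at this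
  rcases mem_symmDiff.1 hx with ⟨hS, hT⟩ | ⟨hT, hS⟩ <;> simp [hS, hT] at this

end Finset

namespace Module.Basis

open Submodule Module
open scoped Finset

variable {ι K V : Type*} [Field K] [AddCommGroup V] [Module K V] (b : Basis ι K V)

theorem span_image_inf_span_image (S T : Set ι) :
    span K (b '' S) ⊓ span K (b '' T) = span K (b '' (S ∩ T)) := by
  ext x
  simp only [mem_inf, mem_span_image, Set.subset_inter_iff]

theorem finrank_span_image (S : Finset ι) : finrank K (span K (b '' S)) = #S := by
  rw [Set.image_eq_range]
  exact (finrank_span_eq_card (b.linearIndependent.comp _ Subtype.val_injective)).trans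
    (Fintype.card_coe S)

theorem eq_of_map_span_image_eq {β : Type*} [LinearOrder β] {f : ι → β}
    (hf : Function.Injective f) {g : V →ₗ[K] V} (hg : Function.Injective g)
    (hflag : ∀ p, (span K (b '' {a | f a ≤ p})).map g = span K (b '' {a | f a ≤ p}))
    {S T : Finset ι} (h : (span K (b '' S)).map g = span K (b '' T)) : S = T := by
  classical
  refine Finset.eq_of_forall_card_filter_le_eq hf fun p => ?_
  have hcard (U : Finset ι) : #(U.filter (f · ≤ p)) =
      finrank K ↥(span K (b '' U) ⊓ span K (b '' {a | f a ≤ p})) := by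
    rw [span_image_inf_span_image, ← finrank_span_image b, Finset.coe_filter]
    rfl
  calc #(S.filter (f · ≤ p))
      = finrank K ↥((span K (b '' S) ⊓ span K (b '' {a | f a ≤ p})).map g) := by
        rw [hcard]; exact (equivMapOfInjective g hg _).finrank_eq
    _ = #(T.filter (f · ≤ p)) := by rw [map_inf _ hg, h, hflag, hcard]

end Module.Basis

theorem Submodule.map_eq_self_of_map_le {K V : Type*} [Field K] [AddCommGroup V] [Module K V]
    [FiniteDimensional K V] {g : V →ₗ[K] V} (hg : Function.Injective g) {X : Submodule K V}
    (h : X.map g ≤ X) : X.map g = X :=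
  eq_of_le_of_finrank_eq h (equivMapOfInjective g hg X).finrank_eq.symm

theorem Matrix.GeneralLinearGroup.mulVecLin_injective {m K : Type*} [Fintype m] [DecidableEq m]
    [Field K] (g : GL m K) : Function.Injective (g : Matrix m m K).mulVecLin :=
  mulVec_injective_iff_isUnit.2 g.isUnit

namespace ShareshianPairs

open Submodule

variable {n : ℕ}

theorem e_eq_basisFun : e n = Pi.basisFun ℂ (Fin (n + 1)) := by
  funext i
  simp [e]

theorem mem_span_e_image {S : Set (Fin (n + 1))} {x : Fin (n + 1) → ℂ} :
    x ∈ span ℂ (e n '' S) ↔ ∀ a ∉ S, x a = 0 := by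
  rw [e_eq_basisFun, Module.Basis.mem_span_image]
  simp [Set.subset_def, not_imp_comm]

theorem map_span_e_image_le {M : Matrix (Fin (n + 1)) (Fin (n + 1)) ℂ} {S : Set (Fin (n + 1))}
    (hM : ∀ s ∈ S, ∀ a ∉ S, M a s = 0) :
    (span ℂ (e n '' S)).map M.mulVecLin ≤ span ℂ (e n '' S) := by
  rw [map_span_le]
  rintro _ ⟨s, hs, rfl⟩
  rw [mem_span_e_image]
  intro a ha
  simpa [e, Matrix.mulVec_single_one] using hM s hs a ha

theorem InH.map_span_e_image {h : GL (Fin (n + 1)) ℂ} (hh : InH n h) (S : Set (Fin (n + 1))) :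
    (span ℂ (e n '' S)).map (h : Matrix (Fin (n + 1)) (Fin (n + 1)) ℂ).mulVecLin =
      span ℂ (e n '' S) :=
  map_eq_self_of_map_le h.mulVecLin_injective
    (map_span_e_image_le fun s hs a ha => hh a s (ne_of_mem_of_not_mem hs ha).symm)

theorem InB.map_span_e_Iic {g : GL (Fin (n + 1)) ℂ} (hg : InB n g) (p : Fin (n + 1)) :
    (span ℂ (e n '' {a | a ≤ p})).map (g : Matrix (Fin (n + 1)) (Fin (n + 1)) ℂ).mulVecLin =
      span ℂ (e n '' {a | a ≤ p}) :=
  map_eq_self_of_map_le g.mulVecLin_injective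
    (map_span_e_image_le fun s hs a ha => hg a s (lt_of_le_of_lt hs (not_le.1 ha)))

theorem eStarVec_finRotate (a : Fin (n + 1)) : eStarVec n (finRotate (n + 1) a) = e n a := by
  induction a using Fin.lastCases with
  | last => simp [eStarVec]
  | cast j => simp [eStarVec, Fin.coeSucc_eq_succ]

theorem flagOf_eStarVec_s1 (p : Fin (n + 1)) :
    flagOf n (eStarVec n) p = span ℂ (e n '' {a | finRotate (n + 1) a ≤ p}) := by
  have : e n '' {a | finRotate (n + 1) a ≤ p} = eStarVec n '' {j | j ≤ p} := by
    rw [← funext eStarVec_finRotate, ← Set.image_image]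
    exact congrArg _ ((finRotate (n + 1)).image_preimage {j | j ≤ p})
  rw [this, flagOf]

theorem InBstar.map_span_e {g : GL (Fin (n + 1)) ℂ} (hg : InBstar n g) (p : Fin (n + 1)) :
    (span ℂ (e n '' {a | finRotate (n + 1) a ≤ p})).map
        (g : Matrix (Fin (n + 1)) (Fin (n + 1)) ℂ).mulVecLin =
      span ℂ (e n '' {a | finRotate (n + 1) a ≤ p}) := by
  rw [← flagOf_eStarVec_s1]
  exact congrFun hg p

theorem exists_finset_eq_span_e_image_of_forall_inH {W : Submodule ℂ (Fin (n + 1) → ℂ)}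
    (hW : ∀ h : GL (Fin (n + 1)) ℂ, InH n h →
      W.map (h : Matrix (Fin (n + 1)) (Fin (n + 1)) ℂ).mulVecLin = W) :
    ∃ S : Finset (Fin (n + 1)), W = span ℂ (e n '' S) := by
  classical
  refine ⟨Finset.univ.filter (e n · ∈ W), le_antisymm (fun x hx => ?_) (span_le.2 ?_)⟩
  · rw [mem_span_e_image]
    intro a ha
    by_contra hxa
    refine ha (Finset.mem_filter.2 ⟨Finset.mem_univ a, ?_⟩)
    let d : Fin (n + 1) → ℂ := Function.update 1 a 2
    have hdet : (Matrix.diagonal d).det ≠ 0 := by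
      rw [Matrix.det_diagonal, Finset.prod_ne_zero_iff]
      intro j _
      by_cases hj : j = a <;> simp [d, hj]
    let h := Matrix.GeneralLinearGroup.mkOfDetNeZero _ hdet
    have hh : InH n h := fun i j hij => Matrix.diagonal_apply_ne d hij
    have hhx : (Matrix.diagonal d).mulVecLin x ∈ W := by
      rw [← hW h hh]
      exact mem_map_of_mem hx
    have hsub : (Matrix.diagonal d).mulVecLin x - x = x a • e n a := by
      funext j
      by_cases hj : j = a
      · simp [d, e, Matrix.mulVec_diagonal, hj]
        ring
      · simp [d, e, Matrix.mulVec_diagonal, hj]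
    have := W.smul_mem (x a)⁻¹ (hsub ▸ W.sub_mem hhx hx)
    rwa [smul_smul, inv_mul_cancel₀ hxa, one_smul] at this
  · rintro _ ⟨a, ha, rfl⟩
    exact (Finset.mem_filter.1 ha).2

theorem flagOf_e_comp (t : Fin (n + 1) → Fin (n + 1)) (i : Fin (n + 1)) :
    flagOf n (fun j => e n (t j)) i = span ℂ (e n '' ↑((Finset.Iic i).image t)) := by
  rw [flagOf, Finset.coe_image, Finset.coe_Iic, Set.image_image]
  rfl

theorem InH.actFlag_flagOf_e {h : GL (Fin (n + 1)) ℂ} (hh : InH n h)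
    (t : Fin (n + 1) → Fin (n + 1)) :
    actFlag n h (flagOf n (fun j => e n (t j))) = flagOf n (fun j => e n (t j)) := by
  funext i
  rw [actFlag, flagOf_e_comp]
  exact hh.map_span_e_image _

theorem map_span_e_image_eq_of_forall_inH {β : Type*} [LinearOrder β] {f : Fin (n + 1) → β}
    (hf : Function.Injective f) {g : GL (Fin (n + 1)) ℂ}
    (hflag : ∀ p, (span ℂ (e n '' {a | f a ≤ p})).map
        (g : Matrix (Fin (n + 1)) (Fin (n + 1)) ℂ).mulVecLin = span ℂ (e n '' {a | f a ≤ p}))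
    (T : Finset (Fin (n + 1)))
    (hfix : ∀ h : GL (Fin (n + 1)) ℂ, InH n h →
      ((span ℂ (e n '' T)).map (g : Matrix (Fin (n + 1)) (Fin (n + 1)) ℂ).mulVecLin).map
          (h : Matrix (Fin (n + 1)) (Fin (n + 1)) ℂ).mulVecLin =
        (span ℂ (e n '' T)).map (g : Matrix (Fin (n + 1)) (Fin (n + 1)) ℂ).mulVecLin) :
    (span ℂ (e n '' T)).map (g : Matrix (Fin (n + 1)) (Fin (n + 1)) ℂ).mulVecLin =
      span ℂ (e n '' T) := by
  obtain ⟨S, hS⟩ := exists_finset_eq_span_e_image_of_forall_inH hfix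
  rw [e_eq_basisFun] at hflag hS ⊢
  rw [hS, (Pi.basisFun ℂ _).eq_of_map_span_image_eq hf g.mulVecLin_injective hflag hS]

theorem actFlag_flagOf_e_eq_of_forall_inH {β : Type*} [LinearOrder β] {f : Fin (n + 1) → β}
    (hf : Function.Injective f) {g : GL (Fin (n + 1)) ℂ}
    (hflag : ∀ p, (span ℂ (e n '' {a | f a ≤ p})).map
        (g : Matrix (Fin (n + 1)) (Fin (n + 1)) ℂ).mulVecLin = span ℂ (e n '' {a | f a ≤ p}))
    (t : Fin (n + 1) → Fin (n + 1))
    (hfix : ∀ h : GL (Fin (n + 1)) ℂ, InH n h →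
      actFlag n h (actFlag n g (flagOf n (fun j => e n (t j)))) =
        actFlag n g (flagOf n (fun j => e n (t j)))) :
    actFlag n g (flagOf n (fun j => e n (t j))) = flagOf n (fun j => e n (t j)) := by
  funext i
  rw [actFlag, flagOf_e_comp]
  exact map_span_e_image_eq_of_forall_inH hf hflag _ fun h hh => by
    simpa only [actFlag, flagOf_e_comp] using congrFun (hfix h hh) i

theorem statement1_general (n : ℕ) (v : Fin (n + 1) → Fin (n + 1) → ℂ)
    (hnohat : ∀ i, ∃ t, v i = e n t) :
    (∀ h : Matrix.GeneralLinearGroup (Fin (n + 1)) ℂ, InH n h →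
      actFlag n h (flagOf n v) = flagOf n v) ∧
    (∀ W ∈ orbit n (InB n) (flagOf n v),
      (∀ h : Matrix.GeneralLinearGroup (Fin (n + 1)) ℂ, InH n h → actFlag n h W = W) →
        W = flagOf n v) ∧
    (∀ W ∈ orbit n (InBstar n) (flagOf n v),
      (∀ h : Matrix.GeneralLinearGroup (Fin (n + 1)) ℂ, InH n h → actFlag n h W = W) →
        W = flagOf n v) := by
  choose t ht using hnohat
  obtain rfl : v = fun i => e n (t i) := funext ht
  refine ⟨fun h hh => hh.actFlag_flagOf_e t, ?_, ?_⟩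
  · rintro W ⟨g, hg, rfl⟩ hfix
    exact actFlag_flagOf_e_eq_of_forall_inH (f := id) Function.injective_id hg.map_span_e_Iic t
      hfix
  · rintro W ⟨g, hg, rfl⟩ hfix
    exact actFlag_flagOf_e_eq_of_forall_inH (finRotate (n + 1)).injective hg.map_span_e t hfix

/-- a standard-form flag with no hat vectors is fixed by `H`, and it is
the unique `H`-fixed flag in its `B`-orbit and in its `B*`-orbit. -/
theorem statement1 (n : ℕ) (hn : 1 ≤ n) (v : Fin (n + 1) → Fin (n + 1) → ℂ)
    (hstd : IsStdForm n v) (hnohat : ∀ i, ∃ t, v i = e n t) :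
    (∀ h : Matrix.GeneralLinearGroup (Fin (n + 1)) ℂ, InH n h →
      actFlag n h (flagOf n v) = flagOf n v) ∧
    (∀ W ∈ orbit n (InB n) (flagOf n v),
      (∀ h : Matrix.GeneralLinearGroup (Fin (n + 1)) ℂ, InH n h → actFlag n h W = W) →
        W = flagOf n v) ∧
    (∀ W ∈ orbit n (InBstar n) (flagOf n v),
      (∀ h : Matrix.GeneralLinearGroup (Fin (n + 1)) ℂ, InH n h → actFlag n h W = W) →
        W = flagOf n v) :=
  statement1_general n v hnohat

end ShareshianPairs
end
end

section
/- Let F = (v_1 ⊂ ⋯ ⊂ v_n) be a flag in standard form in ℂ^n containing hat vectors, with hat vectors v_{i_m} = ê_{j_m} at positions i_k < i_{k-1} < ⋯ < i_1 (so j_k > ⋯ > j_1) and v_p = e_n, all other v_m being standard basis vectors. Let F* be the flag obtained from F by replacing each hat vector ê_{j_m} by the standard basis vector e_{j_m}, leaving all other entries unchanged. Then F* ∈ B*·F, F* is fixed by every invertible diagonal matrix, and F* is the unique flag in B*·F fixed by all of H. -/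
/-
Common setup.  The ambient space is `ℂ^(n+1)` (so the paper's `n` is our `n + 1`,
and the paper's hypothesis `n ≥ 2` becomes `1 ≤ n`).  Coordinates are indexed by
`Fin (n+1)`, zero-indexed, so the paper's index `i ∈ {1, …, n}` is our `i - 1`,
and the paper's `e_n` is `e (Fin.last n)`.
-/

noncomputable section

namespace ShareshianPairs

/-
The unipotent matrix `g = 1 - e_n wᵀ`, where `w` is the indicator vector of the indices `j_m`,
moves every vector by a multiple of `e_n ∈ E*_1`, so it lies in `B*`.  It sends `ê_{j_m}` to
`e_{j_m}` and fixes every other standard basis vector occurring in `F` (a vector `e_{j_m}` in `F`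
would make `ê_{j_m} = e_{j_m} + e_n` dependent), hence `g·F = F*`, a flag of coordinate subspaces,
which `H` fixes.  Conversely an `H`-stable subspace is a coordinate subspace, and `B*` preserves
the numbers `dim (W ∩ E*_r)`.  Since `E*_r` is spanned by one more standard basis vector than
`E*_{r-1}`, these numbers determine a coordinate subspace, so an `H`-fixed flag of
`B*·F = B*·F*` coincides with `F*`.
-/

open Matrix Module Submodule

section CoordSubspace

variable (K : Type*) [Field K] {ι : Type*}

def coordSubspace (A : Set ι) : Submodule K (ι → K) :=
  ⨅ t ∈ Aᶜ, LinearMap.ker (LinearMap.proj t)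

variable {K}

lemma mem_coordSubspace {A : Set ι} {x : ι → K} :
    x ∈ coordSubspace K A ↔ ∀ t ∉ A, x t = 0 := by
  simp [coordSubspace]

lemma coordSubspace_inf (A B : Set ι) :
    coordSubspace K A ⊓ coordSubspace K B = coordSubspace K (A ∩ B) := by
  ext x
  simp only [mem_inf, mem_coordSubspace, Set.mem_inter_iff, not_and_or]
  grind

lemma finrank_coordSubspace [Fintype ι] (A : Set ι) :
    finrank K (coordSubspace K A) = A.ncard := by
  classical
  rw [coordSubspace, (LinearMap.iInfKerProjEquiv K (fun _ => K) disjoint_compl_right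
    (by simp)).finrank_eq, finrank_fintype_fun_eq_card, Set.ncard_eq_toFinset_card']
  simp

lemma span_single_image [Fintype ι] [DecidableEq ι] (A : Set ι) :
    span K ((fun t => Pi.single t (1 : K)) '' A) = coordSubspace K A := by
  ext x
  rw [show (fun t => Pi.single t (1 : K)) = Pi.basisFun K ι from
    funext fun t => (Pi.basisFun_apply K ι t).symm, Basis.mem_span_image, mem_coordSubspace]
  simp [Set.subset_def, not_imp_comm]

end CoordSubspace

section GeneralLinear

variable {K : Type*} [Field K] {ι : Type*} [Fintype ι] [DecidableEq ι]

lemma map_mulVecLin_eq_of_le (g : GL ι K) {U : Submodule K (ι → K)}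
    (hU : U.map (mulVecLin (g : Matrix ι ι K)) ≤ U) :
    U.map (mulVecLin (g : Matrix ι ι K)) = U :=
  eq_of_le_of_finrank_eq hU
    (equivMapOfInjective _ (mulVec_injective_iff_isUnit.2 g.isUnit) U).finrank_eq.symm

lemma isUnit_one_sub_vecMulVec {u w : ι → K} (h : w ⬝ᵥ u = 0) :
    IsUnit (1 - vecMulVec u w) :=
  IsNilpotent.isUnit_one_sub
    ⟨2, by rw [sq, vecMulVec_mul_vecMulVec, h, zero_smul, vecMulVec_zero]⟩

lemma one_sub_vecMulVec_mulVec (u w x : ι → K) :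
    (1 - vecMulVec u w) *ᵥ x = x - (w ⬝ᵥ x) • u := by
  simp [sub_mulVec, vecMulVec_mulVec]

end GeneralLinear

lemma eq_of_ncard_inter_Iic_eq {α : Type*} [LinearOrder α] [Finite α] {S S' : Set α}
    (h : ∀ r, (S ∩ Set.Iic r).ncard = (S' ∩ Set.Iic r).ncard) : S = S' := by
  classical
  ext x
  induction x using WellFoundedLT.induction with
  | _ x ih =>
    have hlt : S ∩ Set.Iio x = S' ∩ Set.Iio x := by
      ext y
      simp only [Set.mem_inter_iff, Set.mem_Iio]
      exact and_congr_left fun hyx => ih y hyx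
    have hcount (T : Set α) :
        (T ∩ Set.Iic x).ncard = (T ∩ Set.Iio x).ncard + if x ∈ T then 1 else 0 := by
      rw [← Set.Iio_insert]
      split_ifs with hx
      · rw [Set.inter_insert_of_mem hx, Set.ncard_insert_of_notMem fun hx' => lt_irrefl x hx'.2]
      · rw [Set.inter_insert_of_notMem hx, add_zero]
    have hx := h x
    rw [hcount, hcount, hlt, add_right_inj] at hx
    split_ifs at hx with hS hS' <;> simp_all

def IsHStable (n : ℕ) (W : Submodule ℂ (Fin (n + 1) → ℂ)) : Prop :=
  ∀ h : GL (Fin (n + 1)) ℂ, InH n h → W.map (mulVecLin (h : Matrix _ _ ℂ)) = W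

section DiagonalStable

variable {n : ℕ}

lemma InH.mulVec_apply {h : GL (Fin (n + 1)) ℂ} (hh : InH n h) (x : Fin (n + 1) → ℂ)
    (t : Fin (n + 1)) : ((h : Matrix _ _ ℂ) *ᵥ x) t = h t t * x t := by
  rw [mulVec, dotProduct]
  exact Finset.sum_eq_single t (fun s _ hst => by rw [hh t s hst.symm, zero_mul]) (by simp)

lemma span_e_image (A : Set (Fin (n + 1))) : span ℂ (e n '' A) = coordSubspace ℂ A :=
  span_single_image A

lemma isHStable_coordSubspace (A : Set (Fin (n + 1))) : IsHStable n (coordSubspace ℂ A) := by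
  intro h hh
  refine map_mulVecLin_eq_of_le h ?_
  rintro _ ⟨x, hx, rfl⟩
  rw [SetLike.mem_coe, mem_coordSubspace] at hx
  rw [mem_coordSubspace]
  intro t ht
  rw [mulVecLin_apply, hh.mulVec_apply, hx t ht, mul_zero]

lemma IsHStable.eq_coordSubspace {W : Submodule ℂ (Fin (n + 1) → ℂ)} (hW : IsHStable n W) :
    W = coordSubspace ℂ {t | e n t ∈ W} := by
  refine le_antisymm (fun x hx => mem_coordSubspace.2 fun t ht => ?_) ?_
  · by_contra hxt
    apply ht
    let d : Fin (n + 1) → ℂ := Pi.mulSingle t 2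
    have hd : IsUnit (diagonal d) :=
      isUnit_diagonal.2 (by simp [Pi.isUnit_iff, d, Pi.mulSingle_apply, apply_ite])
    have hdW : diagonal d *ᵥ x ∈ W := by
      rw [← hW hd.unit (fun r c hrc => diagonal_apply_ne _ hrc)]
      exact ⟨x, hx, rfl⟩
    have hsub : diagonal d *ᵥ x - x = x t • e n t := by
      ext s
      by_cases hst : s = t
      · subst hst
        simp only [d, e, Pi.sub_apply, mulVec_diagonal, Pi.mulSingle_eq_same, Pi.smul_apply,
          Pi.single_eq_same, smul_eq_mul, mul_one]
        ring
      · simp [d, e, hst, mulVec_diagonal]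
    have he : e n t = (x t)⁻¹ • (diagonal d *ᵥ x - x) := by rw [hsub, inv_smul_smul₀ hxt]
    change e n t ∈ W
    rw [he]
    exact W.smul_mem _ (W.sub_mem hdW hx)
  · rw [← span_e_image, span_le]
    rintro _ ⟨t, ht, rfl⟩
    exact ht

end DiagonalStable

section Flags

variable {n : ℕ}

lemma actFlag_flagOf (g : GL (Fin (n + 1)) ℂ) (v : Fin (n + 1) → Fin (n + 1) → ℂ) :
    actFlag n g (flagOf n v) = flagOf n (fun q => (g : Matrix _ _ ℂ) *ᵥ v q) := by
  funext r
  simp only [actFlag, flagOf, map_span, ← Set.image_comp]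
  rfl

lemma flagOf_comp_e (c : Fin (n + 1) → Fin (n + 1)) (r : Fin (n + 1)) :
    flagOf n (e n ∘ c) r = coordSubspace ℂ (c '' Set.Iic r) := by
  rw [← span_e_image, ← Set.image_comp]
  rfl

lemma isHStable_flagOf {u : Fin (n + 1) → Fin (n + 1) → ℂ} (hu : ∀ q, ∃ t, u q = e n t)
    (r : Fin (n + 1)) : IsHStable n (flagOf n u r) := by
  choose c hc using hu
  obtain rfl : u = e n ∘ c := funext hc
  rw [flagOf_comp_e]
  exact isHStable_coordSubspace _

lemma sigma_zero : sigma n 0 = Fin.last n := by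
  rw [sigma, Equiv.Perm.inv_eq_iff_eq, finRotate_last]

lemma sigma_succ (i : Fin n) : sigma n i.succ = i.castSucc := by
  rw [sigma, Equiv.Perm.inv_eq_iff_eq, finRotate_apply, Fin.coeSucc_eq_succ]

lemma eStarVec_eq_comp_sigma : eStarVec n = e n ∘ sigma n := by
  funext i
  induction i using Fin.cases with
  | zero => rw [Function.comp_apply, sigma_zero]; rfl
  | succ i => rw [Function.comp_apply, sigma_succ]; rfl

lemma flagOf_eStarVec_s3 (r : Fin (n + 1)) :
    flagOf n (eStarVec n) r = coordSubspace ℂ (sigma n '' Set.Iic r) := by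
  rw [eStarVec_eq_comp_sigma, flagOf_comp_e]

lemma Lline_le_flagOf_eStarVec (r : Fin (n + 1)) : Lline n ≤ flagOf n (eStarVec n) r :=
  span_le.2 <| Set.singleton_subset_iff.2 <| subset_span ⟨0, Fin.zero_le r, rfl⟩

lemma inBstar_of_mulVec_sub_mem_Lline (g : GL (Fin (n + 1)) ℂ)
    (hg : ∀ x, (g : Matrix _ _ ℂ) *ᵥ x - x ∈ Lline n) : InBstar n g := by
  funext r
  refine map_mulVecLin_eq_of_le g ?_
  rintro _ ⟨x, hx, rfl⟩
  rw [mulVecLin_apply, ← sub_add_cancel (_ *ᵥ x) x]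
  exact add_mem (Lline_le_flagOf_eStarVec r (hg x)) hx

lemma finrank_actFlag_inf_flagOf_eStarVec {g : GL (Fin (n + 1)) ℂ} (hg : InBstar n g)
    (V : Fin (n + 1) → Submodule ℂ (Fin (n + 1) → ℂ)) (q r : Fin (n + 1)) :
    finrank ℂ (actFlag n g V q ⊓ flagOf n (eStarVec n) r : Submodule ℂ _) =
      finrank ℂ (V q ⊓ flagOf n (eStarVec n) r : Submodule ℂ _) := by
  have hinj := mulVec_injective_iff_isUnit.2 g.isUnit
  conv_lhs => rw [actFlag, ← congrFun hg r, actFlag, ← Submodule.map_inf _ hinj]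
  exact (equivMapOfInjective _ hinj _).finrank_eq.symm

lemma IsHStable.eq_of_finrank_inf_flagOf_eStarVec {U U' : Submodule ℂ (Fin (n + 1) → ℂ)}
    (hU : IsHStable n U) (hU' : IsHStable n U')
    (h : ∀ r, finrank ℂ (U ⊓ flagOf n (eStarVec n) r : Submodule ℂ _) =
      finrank ℂ (U' ⊓ flagOf n (eStarVec n) r : Submodule ℂ _)) : U = U' := by
  obtain ⟨A, rfl⟩ : ∃ A, U = coordSubspace ℂ A := ⟨_, hU.eq_coordSubspace⟩
  obtain ⟨A', rfl⟩ : ∃ A', U' = coordSubspace ℂ A' := ⟨_, hU'.eq_coordSubspace⟩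
  congr 1
  refine Set.preimage_injective.2 (sigma n).surjective (eq_of_ncard_inter_Iic_eq fun r => ?_)
  have hr := h r
  rw [flagOf_eStarVec_s3, coordSubspace_inf, coordSubspace_inf, finrank_coordSubspace,
    finrank_coordSubspace, ← Set.image_preimage_inter, ← Set.image_preimage_inter,
    Set.ncard_image_of_injective _ (sigma n).injective,
    Set.ncard_image_of_injective _ (sigma n).injective] at hr
  exact hr

end Flags

section StandardForm

variable {n : ℕ}

lemma ne_e_of_eq_hatE {ι : Type*} {v : ι → Fin (n + 1) → ℂ}
    (hv : LinearIndependent ℂ v) {s : Fin (n + 1)} (hs : s ≠ Fin.last n) {a b : ι}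
    (ha : v a = hatE n s) (hb : v b = e n (Fin.last n)) (c : ι) : v c ≠ e n s := by
  intro hc
  have hab : a ∉ ({b, c} : Set ι) := by
    rintro (rfl | rfl)
    · simpa [hatE, e, hs] using congrFun (ha.symm.trans hb) s
    · simpa [hatE, e, hs.symm] using congrFun (ha.symm.trans hc) (Fin.last n)
  refine hv.notMem_span_image hab ?_
  rw [ha, hatE, Set.image_pair, hb, hc]
  exact add_mem (subset_span (by simp)) (subset_span (by simp))

lemma exists_inBstar_mulVec_eq {v vs : Fin (n + 1) → Fin (n + 1) → ℂ}
    (hv : LinearIndependent ℂ v) {k : ℕ} {i j : Fin k → Fin (n + 1)} {p : Fin (n + 1)}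
    (hhat : ∀ m : Fin k, j m ≠ Fin.last n ∧ v (i m) = hatE n (j m))
    (hp : v p = e n (Fin.last n))
    (hrest : ∀ q : Fin (n + 1), (∀ m : Fin k, q ≠ i m) → ∃ t, v q = e n t)
    (hs1 : ∀ m : Fin k, vs (i m) = e n (j m))
    (hs2 : ∀ q : Fin (n + 1), (∀ m : Fin k, q ≠ i m) → vs q = v q) :
    ∃ g : GL (Fin (n + 1)) ℂ, InBstar n g ∧ ∀ q, (g : Matrix _ _ ℂ) *ᵥ v q = vs q := by
  classical
  let w : Fin (n + 1) → ℂ := (Set.range j).indicator 1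
  have hw_last : w (Fin.last n) = 0 :=
    Set.indicator_of_notMem (by rintro ⟨m, hm⟩; exact (hhat m).1 hm) _
  have hunit : IsUnit (1 - vecMulVec (e n (Fin.last n)) w) :=
    isUnit_one_sub_vecMulVec (by simp [e, hw_last])
  have hg (x : Fin (n + 1) → ℂ) :
      (hunit.unit : Matrix _ _ ℂ) *ᵥ x = x - (w ⬝ᵥ x) • e n (Fin.last n) :=
    one_sub_vecMulVec_mulVec _ _ _
  refine ⟨hunit.unit, inBstar_of_mulVec_sub_mem_Lline _ fun x => ?_, fun q => ?_⟩
  · rw [hg, sub_sub_cancel_left, Lline]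
    exact neg_mem (smul_mem _ _ (mem_span_singleton_self _))
  by_cases hq : ∃ m, q = i m
  · obtain ⟨m, rfl⟩ := hq
    have hw : w (j m) = 1 := Set.indicator_of_mem (Set.mem_range_self m) _
    rw [hg, (hhat m).2, hs1, hatE]
    simp [e, hw, hw_last]
  · push Not at hq
    obtain ⟨t, ht⟩ := hrest q hq
    have hw : w t = 0 := Set.indicator_of_notMem (by
      rintro ⟨m, rfl⟩
      exact ne_e_of_eq_hatE hv (hhat m).1 (hhat m).2 hp q ht) _
    rw [hg, hs2 q hq, ht]
    simp [e, hw]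

end StandardForm

theorem statement3_general (n : ℕ) (v vs : Fin (n + 1) → Fin (n + 1) → ℂ)
    (hstd : IsStdForm n v)
    (k : ℕ) (i j : Fin k → Fin (n + 1)) (p : Fin (n + 1))
    (hhat : ∀ m : Fin k, j m ≠ Fin.last n ∧ v (i m) = hatE n (j m))
    (hp : v p = e n (Fin.last n))
    (hrest : ∀ q : Fin (n + 1), (∀ m : Fin k, q ≠ i m) → ∃ t, v q = e n t)
    (hs1 : ∀ m : Fin k, vs (i m) = e n (j m))
    (hs2 : ∀ q : Fin (n + 1), (∀ m : Fin k, q ≠ i m) → vs q = v q) :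
    flagOf n vs ∈ orbit n (InBstar n) (flagOf n v) ∧
    (∀ h : Matrix.GeneralLinearGroup (Fin (n + 1)) ℂ, InH n h →
      actFlag n h (flagOf n vs) = flagOf n vs) ∧
    (∀ W ∈ orbit n (InBstar n) (flagOf n v),
      (∀ h : Matrix.GeneralLinearGroup (Fin (n + 1)) ℂ, InH n h → actFlag n h W = W) →
        W = flagOf n vs) := by
  obtain ⟨g, hg, hgv⟩ := exists_inBstar_mulVec_eq hstd.1 hhat hp hrest hs1 hs2
  have hact : actFlag n g (flagOf n v) = flagOf n vs := by
    simp only [actFlag_flagOf, hgv]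
  have hvs (q : Fin (n + 1)) : ∃ t, vs q = e n t := by
    by_cases hq : ∃ m, q = i m
    · obtain ⟨m, rfl⟩ := hq
      exact ⟨j m, hs1 m⟩
    · push Not at hq
      simpa only [hs2 q hq] using hrest q hq
  have hstable (q : Fin (n + 1)) : IsHStable n (flagOf n vs q) := isHStable_flagOf hvs q
  refine ⟨⟨g, hg, hact.symm⟩, fun h hh => funext fun q => hstable q h hh, ?_⟩
  rintro W ⟨b, hb, rfl⟩ hW
  funext q
  refine IsHStable.eq_of_finrank_inf_flagOf_eStarVec (fun h hh => congrFun (hW h hh) q)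
    (hstable q) fun r => ?_
  rw [finrank_actFlag_inf_flagOf_eStarVec hb, ← hact, finrank_actFlag_inf_flagOf_eStarVec hg]

/-- for a standard-form flag `F` with hat vectors, the flag `F*`
(obtained by replacing each hat vector `ê_{j_m}` by `e_{j_m}`) lies in `B*·F`,
is fixed by every invertible diagonal matrix, and is the unique `H`-fixed flag
in `B*·F`. -/
theorem statement3 (n : ℕ) (hn : 1 ≤ n) (v vs : Fin (n + 1) → Fin (n + 1) → ℂ)
    (hstd : IsStdForm n v)
    (k : ℕ) (hk : 0 < k) (i j : Fin k → Fin (n + 1)) (p : Fin (n + 1))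
    (hi : StrictAnti i) (hj : StrictMono j)
    (hhat : ∀ m : Fin k, j m ≠ Fin.last n ∧ v (i m) = hatE n (j m))
    (hp : v p = e n (Fin.last n))
    (hrest : ∀ q : Fin (n + 1), (∀ m : Fin k, q ≠ i m) → ∃ t, v q = e n t)
    (hs1 : ∀ m : Fin k, vs (i m) = e n (j m))
    (hs2 : ∀ q : Fin (n + 1), (∀ m : Fin k, q ≠ i m) → vs q = v q) :
    flagOf n vs ∈ orbit n (InBstar n) (flagOf n v) ∧
    (∀ h : Matrix.GeneralLinearGroup (Fin (n + 1)) ℂ, InH n h →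
      actFlag n h (flagOf n vs) = flagOf n vs) ∧
    (∀ W ∈ orbit n (InBstar n) (flagOf n v),
      (∀ h : Matrix.GeneralLinearGroup (Fin (n + 1)) ℂ, InH n h → actFlag n h W = W) →
        W = flagOf n vs) :=
  statement3_general n v vs hstd k i j p hhat hp hrest hs1 hs2

end ShareshianPairs
end
end

section
/- The map F ↦ (F̃, F*) on flags in standard form is injective: if F and G are flags in standard form in ℂ^n with F̃ = G̃ and F* = G*, then F = G. -/
/-
Common setup.  The ambient space is `ℂ^(n+1)` (so the paper's `n` is our `n + 1`,
and the paper's hypothesis `n ≥ 2` becomes `1 ≤ n`).  Coordinates are indexed by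
`Fin (n+1)`, zero-indexed, so the paper's index `i ∈ {1, …, n}` is our `i - 1`,
and the paper's `e_n` is `e (Fin.last n)`.
-/

noncomputable section

/-!
Both `F*` and `F̃` are spanned by permutations of the standard basis: `F*` replaces each
`ê_j` by `e_j`, and `F̃` is `F*` with its entries at the positions `p, i_1, …, i_k` of `e_n`
and of the hat vectors rotated cyclically. A flag spanned by an injective sequence of
standard basis vectors determines the sequence, so `(F̃, F*)` determines the spanning
sequences of `F̃` and `F*`. These in turn determine that of `F`: its entry at a position
is `ê_j` exactly where the two sequences differ and `F*` does not have `e_n`, and is the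
entry of `F*` everywhere else.
-/

open Function Set

theorem LinearIndependent.mem_span_image_iff {ι R M : Type*} [Ring R] [Nontrivial R]
    [AddCommGroup M] [Module R M] {b : ι → M} (hb : LinearIndependent R b)
    {s : Set ι} {x : ι} :
    b x ∈ Submodule.span R (b '' s) ↔ x ∈ s :=
  ⟨fun h => by_contra fun hx => hb.notMem_span_image hx h,
    fun hx => Submodule.subset_span (mem_image_of_mem b hx)⟩

theorem eq_of_image_Iic_eq {ι α : Type*} [LinearOrder ι] [WellFoundedLT ι] {f g : ι → α}
    (hf : Injective f) (h : ∀ i, f '' Iic i = g '' Iic i) : f = g := by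
  funext i
  induction i using WellFoundedLT.induction with
  | _ i ih =>
  obtain ⟨j, hji, hj⟩ : f i ∈ g '' Iic i := h i ▸ mem_image_of_mem f self_mem_Iic
  rcases (mem_Iic.1 hji).lt_or_eq with hlt | rfl
  · exact absurd (hf (hj.symm.trans (ih j hlt).symm)) hlt.ne'
  · exact hj.symm

theorem exists_perm_eq_comp_of_comp_eq {α β ι : Type*} {f g : α → β} {I : ι → α}
    (hI : Injective I) (σ : Equiv.Perm ι) (hoff : ∀ a ∉ range I, g a = f a)
    (hon : g ∘ I = f ∘ I ∘ σ) :
    ∃ π : Equiv.Perm α, g = f ∘ π := by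
  classical
  refine ⟨σ.extendDomain (Equiv.ofInjective I hI), funext fun a => ?_⟩
  by_cases ha : a ∈ range I
  · obtain ⟨x, rfl⟩ := ha
    have hx : σ.extendDomain (Equiv.ofInjective I hI) (I x) = I (σ x) :=
      Equiv.Perm.extendDomain_apply_image σ (Equiv.ofInjective I hI) x
    rw [comp_apply, hx]
    exact congrFun hon x
  · rw [comp_apply, Equiv.Perm.extendDomain_apply_not_subtype _ _ ha, hoff a ha]

theorem Fin.comp_cons_eq_snoc {α β : Type*} {k : ℕ} (hk : 0 < k) {f : α → β} {p : α}
    {i : Fin k → α} {b : Fin k → β} {y : β} (hp : f p = b ⟨0, hk⟩)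
    (hsucc : ∀ (m : Fin k) (h : (m : ℕ) + 1 < k), f (i m) = b ⟨(m : ℕ) + 1, h⟩)
    (hlast : f (i ⟨k - 1, Nat.sub_lt hk Nat.one_pos⟩) = y) :
    f ∘ Fin.cons p i = Fin.snoc b y := by
  funext x
  induction x using Fin.cases with
  | zero =>
    rw [comp_apply, Fin.cons_zero, show (0 : Fin (k + 1)) = Fin.castSucc ⟨0, hk⟩ from rfl,
      Fin.snoc_castSucc, hp]
  | succ m =>
    rw [comp_apply, Fin.cons_succ]
    by_cases h : (m : ℕ) + 1 < k
    · rw [show m.succ = Fin.castSucc ⟨(m : ℕ) + 1, h⟩ from rfl, Fin.snoc_castSucc, hsucc m h]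
    · obtain rfl : m = ⟨k - 1, Nat.sub_lt hk Nat.one_pos⟩ := Fin.ext (by simp; omega)
      rw [show Fin.succ ⟨k - 1, _⟩ = Fin.last k from Fin.ext (by simp; omega), Fin.snoc_last,
        hlast]

namespace ShareshianPairs

variable {n : ℕ}

theorem linearIndependent_e : LinearIndependent ℂ (e n) :=
  Pi.linearIndependent_single_one (Fin (n + 1)) ℂ

theorem e_injective : Injective (e n) :=
  linearIndependent_e.injective

theorem hatE_ne_e {j t : Fin (n + 1)} (hj : j ≠ Fin.last n) : hatE n j ≠ e n t := by
  intro h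
  have hjj := congrFun h j
  have hjl := congrFun h (Fin.last n)
  simp only [hatE, e, Pi.add_apply, Pi.single_apply, if_neg hj,
    if_neg (Ne.symm hj)] at hjj hjl
  split_ifs at hjj hjl <;> simp_all

theorem flagOf_e_comp_s4 (f : Fin (n + 1) → Fin (n + 1)) (i : Fin (n + 1)) :
    flagOf n (e n ∘ f) i = Submodule.span ℂ (e n '' (f '' Iic i)) := by
  rw [flagOf, ← image_comp]
  rfl

theorem eq_of_flagOf_eq {u u' : Fin (n + 1) → Fin (n + 1) → ℂ}
    (hu : ∃ f, Injective f ∧ u = e n ∘ f) (hu' : ∃ g, u' = e n ∘ g)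
    (h : flagOf n u = flagOf n u') : u = u' := by
  obtain ⟨f, hf, rfl⟩ := hu
  obtain ⟨g, rfl⟩ := hu'
  suffices f = g by rw [this]
  refine eq_of_image_Iic_eq hf fun i => Set.ext fun t => ?_
  have hi := congrFun h i
  rw [flagOf_e_comp_s4, flagOf_e_comp_s4] at hi
  rw [← linearIndependent_e.mem_span_image_iff, hi, linearIndependent_e.mem_span_image_iff]

theorem IsStdForm.ne_hatE_of_eq_e {v : Fin (n + 1) → Fin (n + 1) → ℂ} (hv : IsStdForm n v)
    {q q' t : Fin (n + 1)} (hq : v q = e n t) (ht : t ≠ Fin.last n) : v q' ≠ hatE n t := by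
  obtain ⟨hli, -, ⟨p, hp⟩, -, -⟩ := hv
  intro hq'
  have hmem : v q' ∈ Submodule.span ℂ (v '' {q, p}) := by
    rw [hq', hatE, ← hq, ← hp]
    exact Submodule.add_mem _ (Submodule.subset_span ⟨q, Or.inl rfl, rfl⟩)
      (Submodule.subset_span ⟨p, Or.inr rfl, rfl⟩)
  refine hli.notMem_span_image ?_ hmem
  rintro (rfl | rfl)
  · exact hatE_ne_e ht (hq'.symm.trans hq)
  · exact hatE_ne_e ht (hq'.symm.trans hp)

section StarPair

variable {v vs : Fin (n + 1) → Fin (n + 1) → ℂ}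

theorem StarPair.exists_eq_e (hv : IsStdForm n v) (hvs : StarPair n v vs) (q : Fin (n + 1)) :
    ∃ t, vs q = e n t ∧ (v q = e n t ∨ t ≠ Fin.last n ∧ v q = hatE n t) := by
  rcases hv.2.1 q with ⟨t, ht⟩ | ⟨t, hlast, ht⟩
  · exact ⟨t, ((hvs q).1 ⟨t, ht⟩).trans ht, Or.inl ht⟩
  · exact ⟨t, (hvs q).2 t hlast ht, Or.inr ⟨hlast, ht⟩⟩

theorem StarPair.exists_injective_eq_comp (hv : IsStdForm n v) (hvs : StarPair n v vs) :
    ∃ a, Injective a ∧ vs = e n ∘ a := by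
  choose a hvsa hva using hvs.exists_eq_e hv
  refine ⟨a, fun q q' hqq' => hv.1.injective ?_, funext hvsa⟩
  rcases hva q with hq | ⟨hlast, hq⟩ <;> rcases hva q' with hq' | ⟨hlast', hq'⟩
  · rw [hq, hq', hqq']
  · exact absurd hq' (hv.ne_hatE_of_eq_e (hq.trans (congrArg (e n) hqq')) hlast')
  · exact absurd hq (hv.ne_hatE_of_eq_e (hq'.trans (congrArg (e n) hqq'.symm)) hlast)
  · rw [hq, hq', hqq']

end StarPair

section TildePair

variable {v vt vs : Fin (n + 1) → Fin (n + 1) → ℂ}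

theorem TildePair.exists_perm_eq_comp (hv : IsStdForm n v) (hvt : TildePair n v vt)
    (hvs : StarPair n v vs) : ∃ π : Equiv.Perm (Fin (n + 1)), vt = vs ∘ π := by
  rcases hvt with ⟨hall, rfl⟩ |
    ⟨k, hk, i, j, p, hi, -, hhat, hp, hother, ht1, ht2, ht3, ht4⟩
  · exact ⟨1, funext fun q => ((hvs q).1 (hall q)).symm⟩
  have hvsp : vs p = e n (Fin.last n) := ((hvs p).1 ⟨_, hp⟩).trans hp
  have hvsi : ∀ m, vs (i m) = e n (j m) := fun m => (hvs _).2 _ (hhat m).1 (hhat m).2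
  refine exists_perm_eq_comp_of_comp_eq (I := Fin.cons p i) ?_ (finRotate (k + 1)) ?_ ?_
  · refine Fin.cons_injective_iff.2 ⟨?_, hi.injective⟩
    rintro ⟨m, hm⟩
    exact hatE_ne_e (hhat m).1 ((hhat m).2.symm.trans (hm ▸ hp))
  · intro q hq
    simp only [Fin.range_cons, mem_insert_iff, mem_range, not_or] at hq
    have hq' : ∀ m, q ≠ i m := fun m h => hq.2 ⟨m, h.symm⟩
    rw [ht4 q hq' hq.1, (hvs q).1 (hother q hq')]
  · have hvsI : vs ∘ Fin.cons p i = Fin.cons (e n (Fin.last n)) (e n ∘ j) := by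
      rw [Fin.comp_cons, hvsp]
      exact congrArg _ (funext hvsi)
    rw [Fin.comp_cons_eq_snoc hk (b := e n ∘ j) ht3 ht2 ht1, Fin.snoc_eq_cons_rotate,
      ← comp_assoc, hvsI]
    rfl

theorem IsStdForm.apply_eq_ite (hv : IsStdForm n v) (hvt : TildePair n v vt)
    (hvs : StarPair n v vs) (q : Fin (n + 1)) :
    v q = if vt q = vs q ∨ vs q = e n (Fin.last n) then vs q
      else vs q + e n (Fin.last n) := by
  rcases hvt with ⟨hall, rfl⟩ |
    ⟨k, hk, i, j, p, -, hj, hhat, hp, hother, ht1, ht2, ht3, ht4⟩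
  · rw [(hvs q).1 (hall q), if_pos (Or.inl rfl)]
  by_cases hq : ∃ m, q = i m
  · obtain ⟨m, rfl⟩ := hq
    obtain ⟨hjm, hvm⟩ := hhat m
    have hvsm : vs (i m) = e n (j m) := (hvs _).2 _ hjm hvm
    set c : Fin (k + 1) → Fin (n + 1) → ℂ := Fin.snoc (e n ∘ j) (e n (Fin.last n))
    have hc : Injective c := by
      refine Fin.snoc_injective_of_injective (e_injective.comp hj.injective) ?_
      rintro ⟨m', hm'⟩
      exact (hhat m').1 (e_injective hm')
    have hvtm : vt (i m) = c m.succ :=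
      congrFun (Fin.comp_cons_eq_snoc hk (b := e n ∘ j) ht3 ht2 ht1) m.succ
    have hvsm' : vs (i m) = c m.castSucc := by
      simp only [c, hvsm, Fin.snoc_castSucc, comp_apply]
    have hne : ¬(vt (i m) = vs (i m) ∨ vs (i m) = e n (Fin.last n)) := by
      rintro (h | h)
      · exact Fin.castSucc_lt_succ.ne' (hc (hvtm.symm.trans (h.trans hvsm')))
      · exact hjm (e_injective (hvsm.symm.trans h))
    rw [if_neg hne, hvsm, hvm, hatE]
  · push Not at hq
    have hvsq : vs q = v q := (hvs q).1 (hother q hq)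
    by_cases hqp : q = p
    · rw [if_pos (Or.inr (hvsq.trans (hqp ▸ hp))), hvsq]
    · rw [if_pos (Or.inl (by rw [ht4 q hq hqp, hvsq])), hvsq]

end TildePair

theorem statement4_general (n : ℕ)
    (v w vt vs wt ws : Fin (n + 1) → Fin (n + 1) → ℂ)
    (hv : IsStdForm n v) (hw : IsStdForm n w)
    (hvt : TildePair n v vt) (hvs : StarPair n v vs)
    (hwt : TildePair n w wt) (hws : StarPair n w ws)
    (ht : flagOf n vt = flagOf n wt) (hs : flagOf n vs = flagOf n ws) :
    flagOf n v = flagOf n w := by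
  obtain ⟨a, ha, hvsa⟩ := hvs.exists_injective_eq_comp hv
  obtain ⟨b, -, hwsb⟩ := hws.exists_injective_eq_comp hw
  obtain ⟨π, hvtπ⟩ := hvt.exists_perm_eq_comp hv hvs
  obtain ⟨π', hwtπ'⟩ := hwt.exists_perm_eq_comp hw hws
  have hvsws : vs = ws := eq_of_flagOf_eq ⟨a, ha, hvsa⟩ ⟨b, hwsb⟩ hs
  have hvtwt : vt = wt :=
    eq_of_flagOf_eq ⟨a ∘ π, ha.comp π.injective, by rw [hvtπ, hvsa]; rfl⟩
      ⟨b ∘ π', by rw [hwtπ', hwsb]; rfl⟩ ht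
  congr 1
  funext q
  rw [hv.apply_eq_ite hvt hvs, hw.apply_eq_ite hwt hws, hvsws, hvtwt]

/-- the map `F ↦ (F̃, F*)` on flags in standard form is injective. -/
theorem statement4 (n : ℕ) (hn : 1 ≤ n)
    (v w vt vs wt ws : Fin (n + 1) → Fin (n + 1) → ℂ)
    (hv : IsStdForm n v) (hw : IsStdForm n w)
    (hvt : TildePair n v vt) (hvs : StarPair n v vs)
    (hwt : TildePair n w wt) (hws : StarPair n w ws)
    (ht : flagOf n vt = flagOf n wt) (hs : flagOf n vs = flagOf n ws) :
    flagOf n v = flagOf n w :=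
  statement4_general n v w vt vs wt ws hv hw hvt hvs hwt hws ht hs

end ShareshianPairs
end
end

section
/- Let w ∈ S_n, let Δ = {j_1 < j_2 < ⋯ < j_k < n} ∪ {n} be a decreasing sequence for w^{-1}, and set u* = τ_Δ w σ^{-1}. Suppose i ∈ {1,…,n−2} is such that both i and i+1 lie in Δ. Then w^{-1}(i+1) < w^{-1}(i), and (u*)^{-1}(i+1) ≺ (u*)^{-1}(i), where ≺ is the total order on {1,…,n} defined by n ≺ 1 ≺ 2 ≺ ⋯ ≺ n−1. (That is, the simple root ε_i − ε_{i+1} of 𝔤𝔩(n−1) is complex unstable for both w and u*.) -/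
/-
Common setup.  The ambient space is `ℂ^(n+1)` (so the paper's `n` is our `n + 1`,
and the paper's hypothesis `n ≥ 2` becomes `1 ≤ n`).  Coordinates are indexed by
`Fin (n+1)`, zero-indexed, so the paper's index `i ∈ {1, …, n}` is our `i - 1`,
and the paper's `e_n` is `e (Fin.last n)`.
-/

noncomputable section

namespace ShareshianPairs

/-!
`τ_Δ⁻¹` sends each element of `Δ` to the next larger element of `Δ`, so `τ_Δ⁻¹ i = i + 1`
and `τ_Δ⁻¹ (i + 1) = z` for some `z ∈ Δ` with `i + 1 < z` (one exists because `n ∈ Δ`).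
Since `≺` is the pull-back of `<` along `σ⁻¹`, the claim `(u*)⁻¹(i+1) ≺ (u*)⁻¹ i` is
`w⁻¹ z < w⁻¹ (i + 1)`, which is the decreasing property of `Δ` for the pair `i + 1 < z`.
-/

theorem _root_.List.SortedLT.lt_formPerm_apply_and_formPerm_apply_le {α : Type*}
    [LinearOrder α] {l : List α} (hl : l.SortedLT) {x y : α} (hx : x ∈ l) (hy : y ∈ l)
    (hxy : x < y) : x < l.formPerm x ∧ l.formPerm x ≤ y := by
  obtain ⟨k, hk, rfl⟩ := List.mem_iff_getElem.1 hx
  obtain ⟨j, hj, rfl⟩ := List.mem_iff_getElem.1 hy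
  have hkj : k < j := hl.getElem_lt_getElem_iff.1 hxy
  rw [List.formPerm_apply_lt_getElem _ hl.nodup k (by omega)]
  exact ⟨hl.getElem_lt_getElem_iff.2 (Nat.lt_succ_self k), hl.getElem_le_getElem_iff.2 hkj⟩

section tauDelta

variable {n : ℕ} {Δ : Finset (Fin (n + 1))}

theorem tauDelta_inv_eq_formPerm : (tauDelta n Δ)⁻¹ = (Δ.sort (· ≤ ·)).formPerm :=
  inv_inv _

theorem tauDelta_inv_apply_mem {x : Fin (n + 1)} (hx : x ∈ Δ) : (tauDelta n Δ)⁻¹ x ∈ Δ := by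
  rw [tauDelta_inv_eq_formPerm, ← Finset.mem_sort (· ≤ ·)]
  exact List.formPerm_apply_mem_of_mem ((Finset.mem_sort _).2 hx)

theorem lt_tauDelta_inv_apply_and_tauDelta_inv_apply_le {x y : Fin (n + 1)} (hx : x ∈ Δ)
    (hy : y ∈ Δ) (hxy : x < y) : x < (tauDelta n Δ)⁻¹ x ∧ (tauDelta n Δ)⁻¹ x ≤ y := by
  rw [tauDelta_inv_eq_formPerm]
  exact Δ.sortedLT_sort.lt_formPerm_apply_and_formPerm_apply_le
    ((Finset.mem_sort _).2 hx) ((Finset.mem_sort _).2 hy) hxy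

theorem tauDelta_inv_apply_of_add_one_mem {i : Fin (n + 1)} (hi : (i : ℕ) + 1 < n + 1)
    (h1 : i ∈ Δ) (h2 : i + 1 ∈ Δ) : (tauDelta n Δ)⁻¹ i = i + 1 := by
  have hval : ((i + 1 : Fin (n + 1)) : ℕ) = i + 1 := Fin.val_add_one_of_lt' hi
  obtain ⟨hlt, hle⟩ := lt_tauDelta_inv_apply_and_tauDelta_inv_apply_le h1 h2
    (Fin.lt_def.2 (by omega))
  rw [Fin.lt_def] at hlt
  rw [Fin.le_def, hval] at hle
  exact Fin.ext (by omega)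

end tauDelta

theorem precOrd_inv_apply_iff {n : ℕ} {w ustar : Equiv.Perm (Fin (n + 1))}
    {Δ : Finset (Fin (n + 1))} (hu : ustar = tauDelta n Δ * w * (sigma n)⁻¹) (a b : Fin (n + 1)) :
    precOrd n (ustar⁻¹ a) (ustar⁻¹ b) ↔ w⁻¹ ((tauDelta n Δ)⁻¹ a) < w⁻¹ ((tauDelta n Δ)⁻¹ b) := by
  subst hu
  simp [precOrd, sigma, mul_inv_rev, Equiv.Perm.mul_apply]

theorem statement14_general (n : ℕ) (w ustar : Equiv.Perm (Fin (n + 1)))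
    (Δ : Finset (Fin (n + 1))) (hΔ : Fin.last n ∈ Δ)
    (hdec : IsDecreasingFor n Δ w)
    (hu : ustar = tauDelta n Δ * w * (sigma n)⁻¹)
    (i : Fin (n + 1)) (hi : (i : ℕ) + 1 < n)
    (h1 : i ∈ Δ) (h2 : i + 1 ∈ Δ) :
    w⁻¹ (i + 1) < w⁻¹ i ∧ precOrd n (ustar⁻¹ (i + 1)) (ustar⁻¹ i) := by
  have hval : ((i + 1 : Fin (n + 1)) : ℕ) = i + 1 := Fin.val_add_one_of_lt' (by omega)
  have hsucc : i < i + 1 := Fin.lt_def.2 (by omega)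
  have hlast : i + 1 < Fin.last n := Fin.lt_def.2 (by simp [hval, hi])
  refine ⟨hdec i h1 (i + 1) h2 hsucc, ?_⟩
  rw [precOrd_inv_apply_iff hu, tauDelta_inv_apply_of_add_one_mem (by omega) h1 h2]
  exact hdec (i + 1) h2 _ (tauDelta_inv_apply_mem h2)
    (lt_tauDelta_inv_apply_and_tauDelta_inv_apply_le h2 hΔ hlast).1

/-- if both `i` and `i+1` lie in `Δ` (with `i + 1 ≤ n - 1`), then the
simple root `ε_i - ε_{i+1}` of `gl(n-1)` is complex unstable for both `w` and
`u* = τ_Δ w σ⁻¹`: `w⁻¹(i+1) < w⁻¹ i` and `(u*)⁻¹(i+1) ≺ (u*)⁻¹ i`. -/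
theorem statement14 (n : ℕ) (hn : 2 ≤ n) (w ustar : Equiv.Perm (Fin (n + 1)))
    (Δ : Finset (Fin (n + 1))) (hΔ : Fin.last n ∈ Δ)
    (hdec : IsDecreasingFor n Δ w)
    (hu : ustar = tauDelta n Δ * w * (sigma n)⁻¹)
    (i : Fin (n + 1)) (hi : (i : ℕ) + 1 < n)
    (h1 : i ∈ Δ) (h2 : i + 1 ∈ Δ) :
    w⁻¹ (i + 1) < w⁻¹ i ∧ precOrd n (ustar⁻¹ (i + 1)) (ustar⁻¹ i) :=
  statement14_general n w ustar Δ hΔ hdec hu i hi h1 h2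

end ShareshianPairs
end
end

section
/- Let Δ = {j_1 < j_2 < ⋯ < j_k < n} ∪ {n} be a subset of {1,…,n} containing n. Then σ^{-1}τ_Δ equals the product, in increasing order of the index m, of the adjacent transpositions s_m = (m, m+1) over all m ∈ {1,…,n−1} with m ∉ Δ; that is, σ^{-1}τ_Δ = s_1 ⋯ ŝ_{j_1} ⋯ ŝ_{j_2} ⋯ ŝ_{j_k} ⋯ s_{n-1}, where ŝ_{j_i} indicates that the factor s_{j_i} is omitted. -/
/-
Common setup.  The ambient space is `ℂ^(n+1)` (so the paper's `n` is our `n + 1`,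
and the paper's hypothesis `n ≥ 2` becomes `1 ≤ n`).  Coordinates are indexed by
`Fin (n+1)`, zero-indexed, so the paper's index `i ∈ {1, …, n}` is our `i - 1`,
and the paper's `e_n` is `e (Fin.last n)`.
-/

noncomputable section

namespace ShareshianPairs

/-
Both sides come from list cycles: `σ⁻¹ = formPerm [0, 1, …, n]` and `τ_Δ⁻¹` is `formPerm` of the
increasing enumeration of `Δ`, a sublist of `[0, …, n]` with the same last entry.  For any
duplicate-free list `l` and any `Δ` containing its last entry, `formPerm l * (formPerm (l ∩ Δ))⁻¹`
is the ordered product of `swap a b` over consecutive entries `a, b` of `l` with `a ∉ Δ`.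
Induct on `l = x :: y :: l'`.  If `x ∉ Δ`, both sides gain the left factor `swap x y`.  If
`x ∈ Δ` and `d` is the next element of `Δ`, the product `Q` for `y :: l'` fixes `x` and sends
`d` to `y` (through the common last entry of `y :: l'` and of its `Δ`-part), so
`swap x y * Q * swap x d = Q`.
-/

open Equiv

lemma swap_mul_mul_swap_eq_self {α : Type*} [DecidableEq α] {f : Perm α} {x y z : α}
    (hx : f x = x) (hz : f z = y) : swap x y * f * swap x z = f := by
  rw [← hx, ← hz, swap_apply_apply, hx]
  simp [mul_assoc]

section AdjacentSwaps

variable {α : Type*} [DecidableEq α] (p : α → Prop) [DecidablePred p]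

def adjSwapProd (l : List α) : Perm α :=
  (((l.zip l.tail).filter fun ab => ¬ p ab.1).map fun ab => swap ab.1 ab.2).prod

lemma adjSwapProd_cons_cons (x y : α) (l : List α) :
    adjSwapProd p (x :: y :: l) =
      (if p x then 1 else swap x y) * adjSwapProd p (y :: l) := by
  by_cases hx : p x <;> simp [adjSwapProd, hx]

theorem formPerm_mul_inv_formPerm_filter {l : List α} (hl : l.Nodup)
    (hlast : ∀ h : l ≠ [], p (l.getLast h)) :
    l.formPerm * (l.filter (p ·)).formPerm⁻¹ = adjSwapProd p l := by
  induction l with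
  | nil => rfl
  | cons x l ih =>
    rcases l with _ | ⟨y, l⟩
    · rw [List.filter_singleton]
      cases decide (p x) <;> rfl
    obtain ⟨hxL, hL⟩ := List.nodup_cons.mp hl
    have hlastL : ∀ h : y :: l ≠ [], p ((y :: l).getLast h) := fun h => by
      simpa [List.getLast_cons h] using hlast (List.cons_ne_nil x _)
    rw [List.formPerm_cons_cons, adjSwapProd_cons_cons, ← ih hL hlastL, List.filter_cons]
    by_cases hx : p x
    · have hlast_mem : (y :: l).getLast (List.cons_ne_nil y l) ∈ (y :: l).filter (p ·) :=
        List.mem_filter.2 ⟨List.getLast_mem _, by simpa using hlastL _⟩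
      obtain ⟨d, D, hD⟩ := List.exists_cons_of_ne_nil (List.ne_nil_of_mem hlast_mem)
      have hlastD : (d :: D).getLast (List.cons_ne_nil d D) =
          (y :: l).getLast (List.cons_ne_nil y l) := by
        simp only [← hD]
        exact List.getLast_filter_of_pos _ (by simpa using hlastL _)
      have hxD : x ∉ d :: D := hD ▸ fun h => hxL (List.mem_of_mem_filter h)
      have hQx : ((y :: l).formPerm * (d :: D).formPerm⁻¹) x = x := by
        rw [Perm.mul_apply, Perm.inv_eq_iff_eq.mpr (List.formPerm_apply_of_notMem hxD).symm,
          List.formPerm_apply_of_notMem hxL]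
      have hQd : ((y :: l).formPerm * (d :: D).formPerm⁻¹) d = y := by
        rw [Perm.mul_apply, Perm.inv_eq_iff_eq.mpr (List.formPerm_apply_getLast d D).symm, hlastD]
        exact List.formPerm_apply_getLast y l
      simp only [hx, decide_true, hD, List.formPerm_cons_cons, mul_inv_rev, swap_inv, if_true,
        one_mul]
      rw [← mul_assoc, mul_assoc (swap x y)]
      exact swap_mul_mul_swap_eq_self hQx hQd
    · simp [hx, mul_assoc]

end AdjacentSwaps

lemma formPerm_finRange (n : ℕ) : (List.finRange (n + 1)).formPerm = finRotate (n + 1) := by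
  ext x
  have := List.formPerm_apply_getElem _ (List.nodup_finRange (n + 1)) x (by simp [x.is_lt])
  simp only [List.getElem_finRange, List.length_finRange, Fin.cast_mk, Fin.eta] at this
  rw [this, finRotate_apply, Fin.val_add, Fin.val_one', Nat.add_mod_mod]

lemma getLast_finRange_succ (n : ℕ) :
    (List.finRange (n + 1)).getLast (by simp) = Fin.last n := by
  simp [List.finRange_succ_last]

lemma zip_finRange_tail (n : ℕ) :
    (List.finRange (n + 1)).zip (List.finRange (n + 1)).tail =
      (List.finRange n).map fun i => (i.castSucc, i.succ) := by
  apply List.ext_getElem <;> simp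

lemma sort_eq_filter_finRange {n : ℕ} (s : Finset (Fin n)) :
    s.sort (· ≤ ·) = (List.finRange n).filter (· ∈ s) :=
  s.sortedLT_sort.eq_of_mem_iff ((List.sortedLT_finRange n).pairwise.filter _).sortedLT (by simp)

lemma adjSwapProd_finRange (n : ℕ) (p : Fin (n + 1) → Prop) [DecidablePred p] :
    adjSwapProd p (List.finRange (n + 1)) =
      (((List.finRange (n + 1)).filter fun a => decide (a < Fin.last n ∧ ¬ p a)).map
        fun a => swap a (a + 1)).prod := by
  rw [adjSwapProd, zip_finRange_tail, List.finRange_succ_last]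
  simp [List.filter_map, Function.comp_def, Fin.castSucc_lt_last]

theorem statement15_general (n : ℕ) (Δ : Finset (Fin (n + 1)))
    (hΔ : Fin.last n ∈ Δ) :
    (sigma n)⁻¹ * tauDelta n Δ =
      (((List.finRange (n + 1)).filter
          (fun a => decide (a < Fin.last n ∧ a ∉ Δ))).map
        (fun a => Equiv.swap a (a + 1))).prod := by
  rw [sigma, tauDelta, inv_inv, ← formPerm_finRange, sort_eq_filter_finRange,
    formPerm_mul_inv_formPerm_filter (· ∈ Δ) (List.nodup_finRange _)
      (fun _ => getLast_finRange_succ n ▸ hΔ)]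
  exact adjSwapProd_finRange n (· ∈ Δ)

/-- `σ⁻¹ τ_Δ` is the product, in increasing order, of the adjacent
transpositions `s_m = (m, m+1)` over all `m ∉ Δ` (i.e. `s_1 ⋯ ŝ_{j_1} ⋯ ŝ_{j_k} ⋯ s_{n-1}`
with the factors indexed by `Δ` omitted). -/
theorem statement15 (n : ℕ) (hn : 1 ≤ n) (Δ : Finset (Fin (n + 1)))
    (hΔ : Fin.last n ∈ Δ) :
    (sigma n)⁻¹ * tauDelta n Δ =
      (((List.finRange (n + 1)).filter
          (fun a => decide (a < Fin.last n ∧ a ∉ Δ))).map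
        (fun a => Equiv.swap a (a + 1))).prod :=
  statement15_general n Δ hΔ

end ShareshianPairs
end
end

section
/- Let Δ ⊆ {1,…,n} be a subset containing n. Then the Coxeter length (number of inversions) of σ^{-1}τ_Δ equals n − |Δ|. -/
/-
Common setup.  The ambient space is `ℂ^(n+1)` (so the paper's `n` is our `n + 1`).
Coordinates are indexed by `Fin (n+1)`, zero-indexed, so the paper's index `i ∈ {1, …, n}`
is our `i - 1`, and the paper's `e_n` is `e (Fin.last n)`.
-/

noncomputable section

/-
Zero-indexed, `w = σ⁻¹ τ_Δ` sends `a ∉ Δ` to `a + 1`, and `b ∈ Δ` to one more than the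
next smaller element of `Δ` (to `0` if `b = min Δ`).  So `w a ≤ a + 1` everywhere, and the
inversions `a < b`, `w b < w a` are exactly the pairs with `a ∉ Δ` and `b` the least element
of `Δ` above `a`.  Each `a ∉ Δ` has such a `b` since `n ∈ Δ`, so there are `(n + 1) - |Δ|`
inversions.
-/

section FormPermSort

variable {α : Type*} [LinearOrder α] {s : Finset α} {b : α}

theorem List.formPerm_inv_getElem {l : List α} (hl : l.Nodup) {i j : ℕ} (hi : i < l.length)
    (hj : j < l.length) (hij : (i + 1) % l.length = j) : l.formPerm⁻¹ l[j] = l[i] := by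
  subst hij
  exact Equiv.Perm.inv_eq_iff_eq.2 (List.formPerm_apply_getElem l hl i hi).symm

theorem Finset.isGreatest_formPerm_sort_inv_apply (hb : b ∈ s) (hlt : ∃ c ∈ s, c < b) :
    IsGreatest {c | c ∈ s ∧ c < b} ((s.sort (· ≤ ·)).formPerm⁻¹ b) := by
  have hl := s.sortedLT_sort
  obtain ⟨i, hi, rfl⟩ := List.getElem_of_mem (s.mem_sort (· ≤ ·) |>.2 hb)
  obtain ⟨c, hc, hcb⟩ := hlt
  obtain ⟨j, hj, rfl⟩ := List.getElem_of_mem (s.mem_sort (· ≤ ·) |>.2 hc)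
  rw [hl.getElem_lt_getElem_iff] at hcb
  obtain ⟨k, rfl⟩ : ∃ k, i = k + 1 := ⟨i - 1, by omega⟩
  rw [List.formPerm_inv_getElem (s.sort_nodup _) (by omega) hi (Nat.mod_eq_of_lt hi)]
  refine ⟨⟨(s.mem_sort (· ≤ ·)).1 (List.getElem_mem _), by simp [hl]⟩, ?_⟩
  rintro x ⟨hx, hxb⟩
  obtain ⟨m, hm, rfl⟩ := List.getElem_of_mem (s.mem_sort (· ≤ ·) |>.2 hx)
  rw [hl.getElem_lt_getElem_iff] at hxb
  rw [hl.getElem_le_getElem_iff]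
  omega

theorem Finset.isGreatest_formPerm_sort_inv_apply_of_isLeast (hb : IsLeast (s : Set α) b) :
    IsGreatest (s : Set α) ((s.sort (· ≤ ·)).formPerm⁻¹ b) := by
  have hl := s.sortedLT_sort
  obtain ⟨i, hi, rfl⟩ := List.getElem_of_mem (s.mem_sort (· ≤ ·) |>.2 hb.1)
  have hlen : 0 < (s.sort (· ≤ ·)).length := by omega
  obtain rfl : i = 0 := by
    have := hb.2 ((s.mem_sort (· ≤ ·)).1 (List.getElem_mem (l := s.sort (· ≤ ·)) hlen))
    rw [hl.getElem_le_getElem_iff] at this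
    omega
  rw [List.formPerm_inv_getElem (s.sort_nodup _) (Nat.sub_lt hlen one_pos) hlen
    (by rw [Nat.sub_one_add_one hlen.ne', Nat.mod_self])]
  refine ⟨(s.mem_sort (· ≤ ·)).1 (List.getElem_mem _), fun x hx => ?_⟩
  obtain ⟨m, hm, rfl⟩ := List.getElem_of_mem (s.mem_sort (· ≤ ·) |>.2 hx)
  rw [hl.getElem_le_getElem_iff]
  omega

end FormPermSort

namespace ShareshianPairs

section Inversions

variable {n : ℕ} {Δ : Finset (Fin (n + 1))}

theorem tauDelta_apply_of_notMem {a : Fin (n + 1)} (ha : a ∉ Δ) : tauDelta n Δ a = a :=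
  Equiv.Perm.inv_eq_iff_eq.2 (List.formPerm_apply_of_notMem (mt (Δ.mem_sort _).1 ha)).symm

theorem sigma_inv_apply (a : Fin (n + 1)) : (sigma n)⁻¹ a = finRotate (n + 1) a := by
  rw [sigma, inv_inv]

theorem isGreatest_tauDelta_apply {b : Fin (n + 1)} (hb : b ∈ Δ) (hlt : ∃ c ∈ Δ, c < b) :
    IsGreatest {c | c ∈ Δ ∧ c < b} (tauDelta n Δ b) :=
  Δ.isGreatest_formPerm_sort_inv_apply hb hlt

theorem tauDelta_apply_of_isLeast (hΔ : Fin.last n ∈ Δ) {b : Fin (n + 1)}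
    (hb : IsLeast (Δ : Set (Fin (n + 1))) b) : tauDelta n Δ b = Fin.last n :=
  (Δ.isGreatest_formPerm_sort_inv_apply_of_isLeast hb).unique ⟨hΔ, fun x _ => Fin.le_last x⟩

theorem val_sigma_inv_mul_tauDelta_of_notMem (hΔ : Fin.last n ∈ Δ) {a : Fin (n + 1)}
    (ha : a ∉ Δ) : (((sigma n)⁻¹ * tauDelta n Δ) a : ℕ) = a + 1 := by
  rw [Equiv.Perm.mul_apply, tauDelta_apply_of_notMem ha, sigma_inv_apply,
    coe_finRotate_of_ne_last (by rintro rfl; exact ha hΔ)]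

theorem val_sigma_inv_mul_tauDelta_le_iff (hΔ : Fin.last n ∈ Δ) {b : Fin (n + 1)}
    (hb : b ∈ Δ) (a : ℕ) :
    (((sigma n)⁻¹ * tauDelta n Δ) b : ℕ) ≤ a ↔ ∀ c ∈ Δ, c < b → (c : ℕ) < a := by
  rw [Equiv.Perm.mul_apply, sigma_inv_apply]
  by_cases hlt : ∃ c ∈ Δ, c < b
  · obtain ⟨⟨hτΔ, hτb⟩, hτmax⟩ := isGreatest_tauDelta_apply hb hlt
    rw [coe_finRotate_of_ne_last (hτb.trans_le (Fin.le_last b)).ne, Nat.add_one_le_iff]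
    exact ⟨fun h c hc hcb => (Fin.le_def.1 (hτmax ⟨hc, hcb⟩)).trans_lt h,
      fun h => h _ hτΔ hτb⟩
  · push Not at hlt
    rw [tauDelta_apply_of_isLeast hΔ ⟨hb, hlt⟩, finRotate_last]
    exact iff_of_true (Nat.zero_le a) fun c hc hcb => absurd (hlt c hc) (not_le.2 hcb)

theorem val_sigma_inv_mul_tauDelta_le_succ (hΔ : Fin.last n ∈ Δ) (a : Fin (n + 1)) :
    (((sigma n)⁻¹ * tauDelta n Δ) a : ℕ) ≤ a + 1 := by
  by_cases ha : a ∈ Δ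
  · exact ((val_sigma_inv_mul_tauDelta_le_iff hΔ ha a).2 fun _ _ hca => hca).trans a.val.le_succ
  · exact (val_sigma_inv_mul_tauDelta_of_notMem hΔ ha).le

theorem lt_and_sigma_inv_mul_tauDelta_lt_iff (hΔ : Fin.last n ∈ Δ) {a b : Fin (n + 1)} :
    a < b ∧ ((sigma n)⁻¹ * tauDelta n Δ) b < ((sigma n)⁻¹ * tauDelta n Δ) a ↔
      a ∉ Δ ∧ IsLeast {c | c ∈ Δ ∧ a < c} b := by
  constructor
  · rintro ⟨hab, hw⟩
    rw [Fin.lt_def] at hab hw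
    have hbΔ : b ∈ Δ := by
      by_contra hb
      have := val_sigma_inv_mul_tauDelta_of_notMem hΔ hb
      have := val_sigma_inv_mul_tauDelta_le_succ hΔ a
      omega
    have haΔ : a ∉ Δ := by
      intro ha
      have hwa := (val_sigma_inv_mul_tauDelta_le_iff hΔ ha a).2 fun _ _ hca => hca
      have hwb : ¬ _ ≤ (a : ℕ) := fun h =>
        lt_irrefl _ ((val_sigma_inv_mul_tauDelta_le_iff hΔ hbΔ a).1 h a ha hab)
      omega
    have hwb : (((sigma n)⁻¹ * tauDelta n Δ) b : ℕ) ≤ a := by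
      have := val_sigma_inv_mul_tauDelta_of_notMem hΔ haΔ
      omega
    refine ⟨haΔ, ⟨hbΔ, hab⟩, fun c ⟨hc, hac⟩ => not_lt.1 fun hcb => ?_⟩
    exact lt_asymm hac ((val_sigma_inv_mul_tauDelta_le_iff hΔ hbΔ a).1 hwb c hc hcb)
  · rintro ⟨haΔ, ⟨hbΔ, hab⟩, hmin⟩
    refine ⟨hab, ?_⟩
    rw [Fin.lt_def, val_sigma_inv_mul_tauDelta_of_notMem hΔ haΔ, Nat.lt_succ_iff,
      val_sigma_inv_mul_tauDelta_le_iff hΔ hbΔ]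
    intro c hc hcb
    rcases lt_trichotomy c a with hca | rfl | hac
    · exact hca
    · exact absurd hc haΔ
    · exact absurd (hmin ⟨hc, hac⟩) (not_le.2 hcb)

open Finset in
theorem len_sigma_inv_mul_tauDelta (hΔ : Fin.last n ∈ Δ) :
    len n ((sigma n)⁻¹ * tauDelta n Δ) = #Δᶜ := by
  rw [len]
  refine card_nbij Prod.fst (fun p hp => ?_) (fun p hp q hq hpq => ?_) (fun a ha => ?_)
  · exact mem_compl.2 ((lt_and_sigma_inv_mul_tauDelta_lt_iff hΔ).1 (mem_filter.1 hp).2).1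
  · have hp' := ((lt_and_sigma_inv_mul_tauDelta_lt_iff hΔ).1 (mem_filter.1 hp).2).2
    have hq' := ((lt_and_sigma_inv_mul_tauDelta_lt_iff hΔ).1 (mem_filter.1 hq).2).2
    exact Prod.ext hpq (hp'.unique (hpq ▸ hq'))
  · have hne : (Δ.filter (a < ·)).Nonempty := ⟨Fin.last n,
      mem_filter.2 ⟨hΔ, (Fin.le_last a).lt_of_ne (by rintro rfl; exact mem_compl.1 ha hΔ)⟩⟩
    have hmin := (Δ.filter (a < ·)).isLeast_min' hne
    rw [coe_filter] at hmin
    exact ⟨(a, _), mem_filter.2 ⟨mem_univ _,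
      (lt_and_sigma_inv_mul_tauDelta_lt_iff hΔ).2 ⟨mem_compl.1 ha, hmin⟩⟩, rfl⟩

end Inversions

theorem statement16_general (n : ℕ) (Δ : Finset (Fin (n + 1)))
    (hΔ : Fin.last n ∈ Δ) :
    len n ((sigma n)⁻¹ * tauDelta n Δ) = (n + 1) - Δ.card := by
  rw [len_sigma_inv_mul_tauDelta hΔ, Finset.card_compl, Fintype.card_fin]

/-- the Coxeter length (number of inversions) of `σ⁻¹ τ_Δ` equals
`(n+1) - |Δ|` (ambient dimension minus the size of `Δ`). -/
theorem statement16 (n : ℕ) (hn : 1 ≤ n) (Δ : Finset (Fin (n + 1)))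
    (hΔ : Fin.last n ∈ Δ) :
    len n ((sigma n)⁻¹ * tauDelta n Δ) = (n + 1) - Δ.card :=
  statement16_general n Δ hΔ

end ShareshianPairs
end
end
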